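/- arXiv:1108.2028 — 7 statements merged into one kernel-verified Lean document; each statement's English description precedes it below -/
import Mathlib

section
/- Let (A₊, A₋) be a dual pair in (H₊, H₋), let H̃₊ and H̃₋ be further complex Hilbert spaces, and let T₊ : H̃₊ → H₊ and T₋ : H̃₋ → H₋ be continuous linear bijections (topological isomorphisms). Define the operator B₊ with domain {x ∈ H̃₊ : T₊x ∈ D(A₊)} by B₊x := T₋⁻¹(A₊(T₊x)), and the operator B₋ with domain {y ∈ H̃₋ : (T₋⁻¹)*y ∈ D(A₋)} by B₋y := T₊*(A₋((T₋⁻¹)*y)), where * denotes the Hilbert-space adjoint of a bounded operator. Then (B₊, B₋) is a dual pair in (H̃₊, H̃₋); in particular B₊* = B₋ and B₋* = B₊. -/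
open scoped InnerProductSpace

local notation "⟪" x ", " y "⟫" => @inner ℂ _ _ x y

/-- Transport of a dual pair of densely defined operators along
topological isomorphisms.  Let `(A₊, A₋)` be a dual pair in `(H₊, H₋)` (each operator is
densely defined and is the Hilbert-space adjoint of the other), and let
`T₊ : H̃₊ ≃ H₊`, `T₋ : H̃₋ ≃ H₋` be topological isomorphisms.  If `B₊` is the operator
with domain `{x : T₊ x ∈ D(A₊)}` given by `B₊ x = T₋⁻¹ (A₊ (T₊ x))` and `B₋` is the
operator with domain `{y : (T₋⁻¹)* y ∈ D(A₋)}` given by `B₋ y = T₊* (A₋ ((T₋⁻¹)* y))`,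
then `(B₊, B₋)` is a dual pair in `(H̃₊, H̃₋)`:  both are densely defined, `B₊* = B₋`
and `B₋* = B₊`. -/
theorem stmt_0
    {Hp Hm Hpt Hmt : Type*}
    [NormedAddCommGroup Hp] [InnerProductSpace ℂ Hp] [CompleteSpace Hp]
    [NormedAddCommGroup Hm] [InnerProductSpace ℂ Hm] [CompleteSpace Hm]
    [NormedAddCommGroup Hpt] [InnerProductSpace ℂ Hpt] [CompleteSpace Hpt]
    [NormedAddCommGroup Hmt] [InnerProductSpace ℂ Hmt] [CompleteSpace Hmt]
    (Ap : Hp →ₗ.[ℂ] Hm) (Am : Hm →ₗ.[ℂ] Hp)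
    (hApdense : Dense (Ap.domain : Set Hp)) (hAmdense : Dense (Am.domain : Set Hm))
    (hadj₁ : Ap.adjoint = Am) (hadj₂ : Am.adjoint = Ap)
    (Tp : Hpt ≃L[ℂ] Hp) (Tm : Hmt ≃L[ℂ] Hm)
    (Bp : Hpt →ₗ.[ℂ] Hmt) (Bm : Hmt →ₗ.[ℂ] Hpt)
    (hBpdom : Bp.domain
      = Ap.domain.comap ((Tp : Hpt →L[ℂ] Hp) : Hpt →ₗ[ℂ] Hp))
    (hBpval : ∀ (x : Bp.domain) (hx : Tp (x : Hpt) ∈ Ap.domain),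
      Bp x = Tm.symm (Ap ⟨Tp (x : Hpt), hx⟩))
    (hBmdom : Bm.domain
      = Am.domain.comap
          ((ContinuousLinearMap.adjoint ((Tm.symm : Hm →L[ℂ] Hmt)) : Hmt →L[ℂ] Hm) :
            Hmt →ₗ[ℂ] Hm))
    (hBmval : ∀ (y : Bm.domain)
        (hy : ContinuousLinearMap.adjoint ((Tm.symm : Hm →L[ℂ] Hmt)) (y : Hmt) ∈ Am.domain),
      Bm y = ContinuousLinearMap.adjoint ((Tp : Hpt →L[ℂ] Hp))
          (Am ⟨ContinuousLinearMap.adjoint ((Tm.symm : Hm →L[ℂ] Hmt)) (y : Hmt), hy⟩)) :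
    Dense (Bp.domain : Set Hpt) ∧ Dense (Bm.domain : Set Hmt) ∧
      Bp.adjoint = Bm ∧ Bm.adjoint = Bp := by
  subst hadj₁
  classical
  set S : Hmt →L[ℂ] Hm := ContinuousLinearMap.adjoint ((Tm.symm : Hm →L[ℂ] Hmt)) with hS
  set S' : Hm →L[ℂ] Hmt := ContinuousLinearMap.adjoint ((Tm : Hmt →L[ℂ] Hm)) with hS'
  -- composition identities
  have hSS'comp : S.comp S' = ContinuousLinearMap.id ℂ Hm := by
    rw [hS, hS', ← ContinuousLinearMap.adjoint_comp,
      ContinuousLinearEquiv.coe_comp_coe_symm, ContinuousLinearMap.adjoint_id]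
  have hS'Scomp : S'.comp S = ContinuousLinearMap.id ℂ Hmt := by
    rw [hS, hS', ← ContinuousLinearMap.adjoint_comp,
      ContinuousLinearEquiv.coe_symm_comp_coe, ContinuousLinearMap.adjoint_id]
  have hSS' : ∀ v : Hm, S (S' v) = v := fun v =>
    congrFun (congrArg DFunLike.coe hSS'comp) v
  have hS'S : ∀ y : Hmt, S' (S y) = y := fun y =>
    congrFun (congrArg DFunLike.coe hS'Scomp) y
  have hTpTpcomp : (ContinuousLinearMap.adjoint ((Tp : Hpt →L[ℂ] Hp))).comp
      (ContinuousLinearMap.adjoint ((Tp.symm : Hp →L[ℂ] Hpt)))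
      = ContinuousLinearMap.id ℂ Hpt := by
    rw [← ContinuousLinearMap.adjoint_comp,
      ContinuousLinearEquiv.coe_symm_comp_coe, ContinuousLinearMap.adjoint_id]
  have hTpTp : ∀ z : Hpt, ContinuousLinearMap.adjoint ((Tp : Hpt →L[ℂ] Hp))
      (ContinuousLinearMap.adjoint ((Tp.symm : Hp →L[ℂ] Hpt)) z) = z := fun z =>
    congrFun (congrArg DFunLike.coe hTpTpcomp) z
  -- density of Bp.domain
  have hBpdense : Dense (Bp.domain : Set Hpt) := by
    have h1 : (Bp.domain : Set Hpt) = (Tp.symm : Hp → Hpt) '' (Ap.domain : Set Hp) := by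
      rw [hBpdom]
      ext x
      constructor
      · intro hx
        exact ⟨Tp x, hx, Tp.symm_apply_apply x⟩
      · rintro ⟨u, hu, rfl⟩
        simpa [Submodule.mem_comap] using hu
    rw [h1]
    exact Tp.symm.surjective.denseRange.dense_image Tp.symm.continuous hApdense
  -- density of Bm.domain
  have hBmdense : Dense (Bm.domain : Set Hmt) := by
    have h1 : (Bm.domain : Set Hmt) = (S' : Hm → Hmt) '' (Ap.adjoint.domain : Set Hm) := by
      rw [hBmdom]
      ext y
      constructor
      · intro hy
        exact ⟨S y, hy, hS'S y⟩
      · rintro ⟨v, hv, rfl⟩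
        have : S (S' v) ∈ Ap.adjoint.domain := by rw [hSS']; exact hv
        simpa [Submodule.mem_comap] using this
    rw [h1]
    have hsurj : Function.Surjective (S' : Hm → Hmt) := fun y => ⟨S y, hS'S y⟩
    exact hsurj.denseRange.dense_image S'.continuous hAmdense
  -- Bp and Bm are formally adjoint
  have hform : Bp.IsFormalAdjoint Bm := by
    intro x y
    have hx : Tp (x : Hpt) ∈ Ap.domain := hBpdom.le x.2
    have hy : S (y : Hmt) ∈ Ap.adjoint.domain := hBmdom.le y.2
    rw [hBpval x hx, hBmval y hy]
    calc ⟪(Tm.symm (Ap ⟨Tp (x : Hpt), hx⟩) : Hmt), (y : Hmt)⟫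
        = ⟪(Ap ⟨Tp (x : Hpt), hx⟩ : Hm), S (y : Hmt)⟫ :=
          (ContinuousLinearMap.adjoint_inner_right ((Tm.symm : Hm →L[ℂ] Hmt))
            (Ap ⟨Tp (x : Hpt), hx⟩) (y : Hmt)).symm
      _ = ⟪(Tp (x : Hpt) : Hp), (Ap.adjoint ⟨S (y : Hmt), hy⟩ : Hp)⟫ := by
          rw [← inner_conj_symm,
            ← (LinearPMap.adjoint_isFormalAdjoint hApdense) ⟨S (y : Hmt), hy⟩ ⟨Tp (x : Hpt), hx⟩,
            inner_conj_symm]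
      _ = ⟪(x : Hpt), ContinuousLinearMap.adjoint ((Tp : Hpt →L[ℂ] Hp))
            (Ap.adjoint ⟨S (y : Hmt), hy⟩)⟫ :=
          (ContinuousLinearMap.adjoint_inner_right ((Tp : Hpt →L[ℂ] Hp)) (x : Hpt)
            (Ap.adjoint ⟨S (y : Hmt), hy⟩)).symm
  -- the key inner-product identity for elements of Bp.adjoint.domain
  have hxy : ∀ (y : Bp.adjoint.domain) (u : Ap.domain),
      ⟪(ContinuousLinearMap.adjoint ((Tp.symm : Hp →L[ℂ] Hpt)) (Bp.adjoint y) : Hp),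
        (u : Hp)⟫ = ⟪(S (y : Hmt) : Hm), (Ap u : Hm)⟫ := by
    intro y u
    have hmem : Tp.symm (u : Hp) ∈ Bp.domain := by
      rw [hBpdom]
      simp only [Submodule.mem_comap]
      show Tp (Tp.symm (u : Hp)) ∈ Ap.domain
      rw [Tp.apply_symm_apply]; exact u.2
    set x : Bp.domain := ⟨Tp.symm (u : Hp), hmem⟩ with hxdef
    have hx : Tp (x : Hpt) ∈ Ap.domain := hBpdom.le x.2
    have hsub : (⟨Tp (x : Hpt), hx⟩ : Ap.domain) = u := by
      apply Subtype.ext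
      simp [hxdef]
    calc ⟪(ContinuousLinearMap.adjoint ((Tp.symm : Hp →L[ℂ] Hpt)) (Bp.adjoint y) : Hp), (u : Hp)⟫
        = ⟪(Bp.adjoint y : Hpt), (Tp.symm (u : Hp) : Hpt)⟫ :=
          ContinuousLinearMap.adjoint_inner_left ((Tp.symm : Hp →L[ℂ] Hpt)) (u : Hp)
            (Bp.adjoint y)
      _ = ⟪(y : Hmt), (Bp x : Hmt)⟫ :=
          (LinearPMap.adjoint_isFormalAdjoint hBpdense) y x
      _ = ⟪(y : Hmt), (Tm.symm (Ap ⟨Tp (x : Hpt), hx⟩) : Hmt)⟫ := by rw [hBpval x hx]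
      _ = ⟪(S (y : Hmt) : Hm), (Ap ⟨Tp (x : Hpt), hx⟩ : Hm)⟫ :=
          (ContinuousLinearMap.adjoint_inner_left ((Tm.symm : Hm →L[ℂ] Hmt))
            (Ap ⟨Tp (x : Hpt), hx⟩) (y : Hmt)).symm
      _ = ⟪(S (y : Hmt) : Hm), (Ap u : Hm)⟫ := by rw [hsub]
  -- key1 : Bp.adjoint = Bm
  have key1 : Bp.adjoint = Bm := by
    have hle : Bm ≤ Bp.adjoint := LinearPMap.IsFormalAdjoint.le_adjoint hBpdense hform
    have hd1 : Bm.domain ≤ Bp.adjoint.domain := fun z hz => by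
      obtain ⟨w, hw, -⟩ := LinearPMap.exists_of_le hle ⟨z, hz⟩
      have : (w : Hmt) ∈ Bp.adjoint.domain := w.2
      rwa [← hw] at this
    have hd2 : Bp.adjoint.domain ≤ Bm.domain := fun z hz => by
      rw [hBmdom]
      exact LinearPMap.mem_adjoint_domain_of_exists _
        ⟨ContinuousLinearMap.adjoint ((Tp.symm : Hp →L[ℂ] Hpt)) (Bp.adjoint ⟨z, hz⟩),
          hxy ⟨z, hz⟩⟩
    exact (LinearPMap.eq_of_le_of_domain_eq hle (le_antisymm hd1 hd2)).symm
  -- the key inner-product identity for elements of Bm.adjoint.domain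
  have hxy2 : ∀ (x : Bm.adjoint.domain) (v : Ap.adjoint.domain),
      ⟪(Tm (Bm.adjoint x) : Hm), (v : Hm)⟫
        = ⟪(Tp (x : Hpt) : Hp), (Ap.adjoint v : Hp)⟫ := by
    intro x v
    have hmem : S' (v : Hm) ∈ Bm.domain := by
      rw [hBmdom]
      have hv : S (S' (v : Hm)) ∈ Ap.adjoint.domain := by rw [hSS']; exact v.2
      simpa [Submodule.mem_comap] using hv
    set y : Bm.domain := ⟨S' (v : Hm), hmem⟩ with hydef
    have hy : S (y : Hmt) ∈ Ap.adjoint.domain := hBmdom.le y.2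
    have hsub : (⟨S (y : Hmt), hy⟩ : Ap.adjoint.domain) = v := by
      apply Subtype.ext
      simp [hydef, hSS']
    calc ⟪(Tm (Bm.adjoint x) : Hm), (v : Hm)⟫
        = ⟪(Bm.adjoint x : Hmt), (S' (v : Hm) : Hmt)⟫ :=
          (ContinuousLinearMap.adjoint_inner_right ((Tm : Hmt →L[ℂ] Hm))
            (Bm.adjoint x) (v : Hm)).symm
      _ = ⟪(x : Hpt), (Bm y : Hpt)⟫ :=
          (LinearPMap.adjoint_isFormalAdjoint hBmdense) x y
      _ = ⟪(x : Hpt), (ContinuousLinearMap.adjoint ((Tp : Hpt →L[ℂ] Hp))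
            (Ap.adjoint ⟨S (y : Hmt), hy⟩) : Hpt)⟫ := by rw [hBmval y hy]
      _ = ⟪(Tp (x : Hpt) : Hp), (Ap.adjoint ⟨S (y : Hmt), hy⟩ : Hp)⟫ :=
          ContinuousLinearMap.adjoint_inner_right ((Tp : Hpt →L[ℂ] Hp)) (x : Hpt)
            (Ap.adjoint ⟨S (y : Hmt), hy⟩)
      _ = ⟪(Tp (x : Hpt) : Hp), (Ap.adjoint v : Hp)⟫ := by rw [hsub]
  have hdomeq2 : Ap.adjoint.adjoint.domain = Ap.domain := congrArg LinearPMap.domain hadj₂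
  -- key2 : Bm.adjoint = Bp
  have key2 : Bm.adjoint = Bp := by
    have hle : Bp ≤ Bm.adjoint := LinearPMap.IsFormalAdjoint.le_adjoint hBmdense hform.symm
    have hd1 : Bp.domain ≤ Bm.adjoint.domain := fun z hz => by
      obtain ⟨w, hw, -⟩ := LinearPMap.exists_of_le hle ⟨z, hz⟩
      have : (w : Hpt) ∈ Bm.adjoint.domain := w.2
      rwa [← hw] at this
    have hd2 : Bm.adjoint.domain ≤ Bp.domain := fun z hz => by
      rw [hBpdom]
      have hz2 : Tp z ∈ Ap.adjoint.adjoint.domain :=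
        LinearPMap.mem_adjoint_domain_of_exists _
          ⟨Tm (Bm.adjoint ⟨z, hz⟩), hxy2 ⟨z, hz⟩⟩
      rw [hdomeq2] at hz2
      exact hz2
    exact (LinearPMap.eq_of_le_of_domain_eq hle (le_antisymm hd1 hd2)).symm
  exact ⟨hBpdense, hBmdense, key1, key2⟩
end

section
/- Let (A₊, A₋) be a dual pair in (H₊, H₋) having the partial compactness property. Then the range of A₊ is closed in H₋ and the range of A₋ is closed in H₊, and one has the orthogonal decompositions H₊ = ker A₊ ⊕ range A₋ and H₋ = ker A₋ ⊕ range A₊. -/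
open Filter Topology


/-- Let `(A₊, A₋)` be a dual pair in `(H₊, H₋)` (densely defined mutually
adjoint operators) having the partial compactness property.  Then `range A₊` is closed in
`H₋`, `range A₋` is closed in `H₊`, and one has the orthogonal decompositions
`H₊ = ker A₊ ⊕ range A₋` and `H₋ = ker A₋ ⊕ range A₊`. -/
theorem stmt_1
    {Hp Hm : Type*}
    [NormedAddCommGroup Hp] [InnerProductSpace ℂ Hp] [CompleteSpace Hp]
    [NormedAddCommGroup Hm] [InnerProductSpace ℂ Hm] [CompleteSpace Hm]
    (Ap : Hp →ₗ.[ℂ] Hm) (Am : Hm →ₗ.[ℂ] Hp)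
    (hApdense : Dense (Ap.domain : Set Hp)) (hAmdense : Dense (Am.domain : Set Hm))
    (hadj₁ : Ap.adjoint = Am) (hadj₂ : Am.adjoint = Ap)
    -- partial compactness property
    (hpc : ∀ x : ℕ → Ap.domain,
      (∀ n, (x n : Hp) ∈ closure (Set.range fun y : Am.domain => Am y)) →
      (∃ C : ℝ, ∀ n, ‖(x n : Hp)‖ + ‖Ap (x n)‖ ≤ C) →
      ∃ (φ : ℕ → ℕ) (l : Hp), StrictMono φ ∧
        Filter.Tendsto (fun n => (x (φ n) : Hp)) Filter.atTop (nhds l)) :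
    -- closed ranges
    IsClosed (Set.range fun x : Ap.domain => Ap x) ∧
    IsClosed (Set.range fun y : Am.domain => Am y) ∧
    -- H₊ = ker A₊ ⊕ range A₋ :  existence of the decomposition …
    (∀ u : Hp, ∃ k r : Hp,
      (∃ hk : k ∈ Ap.domain, Ap ⟨k, hk⟩ = 0) ∧
      r ∈ Set.range (fun y : Am.domain => Am y) ∧ u = k + r) ∧
    -- … and orthogonality of the two summands
    (∀ k r : Hp, (∃ hk : k ∈ Ap.domain, Ap ⟨k, hk⟩ = 0) →
      r ∈ Set.range (fun y : Am.domain => Am y) → (inner ℂ k r : ℂ) = 0) ∧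
    -- H₋ = ker A₋ ⊕ range A₊ :  existence of the decomposition …
    (∀ v : Hm, ∃ k r : Hm,
      (∃ hk : k ∈ Am.domain, Am ⟨k, hk⟩ = 0) ∧
      r ∈ Set.range (fun x : Ap.domain => Ap x) ∧ v = k + r) ∧
    -- … and orthogonality of the two summands
    (∀ k r : Hm, (∃ hk : k ∈ Am.domain, Am ⟨k, hk⟩ = 0) →
      r ∈ Set.range (fun x : Ap.domain => Ap x) → (inner ℂ k r : ℂ) = 0) := by
  -- formal adjoint identity
  have h₁ : ∀ (x : Ap.domain) (y : Am.domain),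
      (inner ℂ (Ap x) (y : Hm) : ℂ) = inner ℂ (x : Hp) (Am y) := by
    have := Am.adjoint_isFormalAdjoint hAmdense
    rw [hadj₂] at this
    exact this
  have h₁s : ∀ (y : Am.domain) (x : Ap.domain),
      (inner ℂ (Am y) (x : Hp) : ℂ) = inner ℂ (y : Hm) (Ap x) := by
    intro y x
    have h := congrArg (starRingEnd ℂ) (h₁ x y)
    rw [inner_conj_symm, inner_conj_symm] at h
    exact h.symm
  -- ranges as submodules
  set Rm : Submodule ℂ Hp := LinearMap.range Am.toFun with hRm
  set Rp : Submodule ℂ Hm := LinearMap.range Ap.toFun with hRp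
  have hRmset : (Rm : Set Hp) = Set.range (fun y : Am.domain => Am y) := by
    ext w; simp [hRm, LinearMap.mem_range]
  have hRpset : (Rp : Set Hm) = Set.range (fun x : Ap.domain => Ap x) := by
    ext w; simp [hRp, LinearMap.mem_range]
  set K : Submodule ℂ Hp := Rm.topologicalClosure with hK
  set K' : Submodule ℂ Hm := Rp.topologicalClosure with hK'
  haveI : CompleteSpace K := Rm.isClosed_topologicalClosure.completeSpace_coe
  haveI : CompleteSpace K' := Rp.isClosed_topologicalClosure.completeSpace_coe
  -- closedness of Ap (it is an adjoint)
  have hclosedAp : ∀ (x : ℕ → Ap.domain) (l : Hp) (v : Hm),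
      Tendsto (fun n => (x n : Hp)) atTop (𝓝 l) →
      Tendsto (fun n => (Ap (x n) : Hm)) atTop (𝓝 v) →
      ∃ hl : l ∈ Ap.domain, Ap ⟨l, hl⟩ = v := by
    intro x l v hxl hxv
    have key : ∀ y : Am.domain, (inner ℂ v (y : Hm) : ℂ) = inner ℂ l (Am y) := by
      intro y
      have t1 : Tendsto (fun n => (inner ℂ (Ap (x n)) (y : Hm) : ℂ)) atTop
          (𝓝 (inner ℂ v (y : Hm))) := hxv.inner tendsto_const_nhds
      have t2 : Tendsto (fun n => (inner ℂ ((x n : Hp)) (Am y) : ℂ)) atTop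
          (𝓝 (inner ℂ l (Am y))) := hxl.inner tendsto_const_nhds
      have he : (fun n => (inner ℂ (Ap (x n)) (y : Hm) : ℂ))
          = fun n => inner ℂ ((x n : Hp)) (Am y) := funext fun n => h₁ (x n) y
      rw [he] at t1
      exact tendsto_nhds_unique t1 t2
    have hl : l ∈ Am.adjoint.domain :=
      LinearPMap.mem_adjoint_domain_of_exists l ⟨v, fun y => key y⟩
    have hval : Am.adjoint ⟨l, hl⟩ = v :=
      LinearPMap.adjoint_apply_eq hAmdense ⟨l, hl⟩ (fun y => key y)
    have hpack : ∃ hl : l ∈ Am.adjoint.domain, Am.adjoint ⟨l, hl⟩ = v := ⟨hl, hval⟩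
    rw [hadj₂] at hpack
    exact hpack
  -- closedness of Am
  have hclosedAm : ∀ (r : ℕ → Am.domain) (l : Hm) (u : Hp),
      Tendsto (fun n => (r n : Hm)) atTop (𝓝 l) →
      Tendsto (fun n => (Am (r n) : Hp)) atTop (𝓝 u) →
      ∃ hl : l ∈ Am.domain, Am ⟨l, hl⟩ = u := by
    intro r l u hrl hru
    have key : ∀ x : Ap.domain, (inner ℂ u (x : Hp) : ℂ) = inner ℂ l (Ap x) := by
      intro x
      have t1 : Tendsto (fun n => (inner ℂ (Am (r n)) (x : Hp) : ℂ)) atTop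
          (𝓝 (inner ℂ u (x : Hp))) := hru.inner tendsto_const_nhds
      have t2 : Tendsto (fun n => (inner ℂ ((r n : Hm)) (Ap x) : ℂ)) atTop
          (𝓝 (inner ℂ l (Ap x))) := hrl.inner tendsto_const_nhds
      have he : (fun n => (inner ℂ (Am (r n)) (x : Hp) : ℂ))
          = fun n => inner ℂ ((r n : Hm)) (Ap x) := funext fun n => h₁s (r n) x
      rw [he] at t1
      exact tendsto_nhds_unique t1 t2
    have hl : l ∈ Ap.adjoint.domain :=
      LinearPMap.mem_adjoint_domain_of_exists l ⟨u, fun x => key x⟩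
    have hval : Ap.adjoint ⟨l, hl⟩ = u :=
      LinearPMap.adjoint_apply_eq hApdense ⟨l, hl⟩ (fun x => key x)
    have hpack : ∃ hl : l ∈ Ap.adjoint.domain, Ap.adjoint ⟨l, hl⟩ = u := ⟨hl, hval⟩
    rw [hadj₁] at hpack
    exact hpack
  -- perpendicular to the range lands in the kernel
  have kerPerp_p : ∀ u : Hp, (∀ y : Am.domain, (inner ℂ u (Am y) : ℂ) = 0) →
      ∃ hu : u ∈ Ap.domain, Ap ⟨u, hu⟩ = 0 := by
    intro u hu
    have hl : u ∈ Am.adjoint.domain :=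
      LinearPMap.mem_adjoint_domain_of_exists u ⟨0, fun y => by simp [hu y]⟩
    have hval : Am.adjoint ⟨u, hl⟩ = 0 :=
      LinearPMap.adjoint_apply_eq hAmdense ⟨u, hl⟩ (fun y => by simp [hu y])
    have hpack : ∃ hl : u ∈ Am.adjoint.domain, Am.adjoint ⟨u, hl⟩ = 0 := ⟨hl, hval⟩
    rw [hadj₂] at hpack
    exact hpack
  have kerPerp_m : ∀ v : Hm, (∀ x : Ap.domain, (inner ℂ v (Ap x) : ℂ) = 0) →
      ∃ hv : v ∈ Am.domain, Am ⟨v, hv⟩ = 0 := by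
    intro v hv
    have hl : v ∈ Ap.adjoint.domain :=
      LinearPMap.mem_adjoint_domain_of_exists v ⟨0, fun x => by simp [hv x]⟩
    have hval : Ap.adjoint ⟨v, hl⟩ = 0 :=
      LinearPMap.adjoint_apply_eq hApdense ⟨v, hl⟩ (fun x => by simp [hv x])
    have hpack : ∃ hl : v ∈ Ap.adjoint.domain, Ap.adjoint ⟨v, hl⟩ = 0 := ⟨hl, hval⟩
    rw [hadj₁] at hpack
    exact hpack
  -- orthogonality of kernel and range
  have orth_p : ∀ k r : Hp, (∃ hk : k ∈ Ap.domain, Ap ⟨k, hk⟩ = 0) →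
      r ∈ Set.range (fun y : Am.domain => Am y) → (inner ℂ k r : ℂ) = 0 := by
    rintro k r ⟨hk, hk0⟩ ⟨y, rfl⟩
    have := h₁ ⟨k, hk⟩ y
    rw [hk0] at this
    simpa using this.symm
  have orth_m : ∀ k r : Hm, (∃ hk : k ∈ Am.domain, Am ⟨k, hk⟩ = 0) →
      r ∈ Set.range (fun x : Ap.domain => Ap x) → (inner ℂ k r : ℂ) = 0 := by
    rintro k r ⟨hk, hk0⟩ ⟨x, rfl⟩
    have := h₁s ⟨k, hk⟩ x
    rw [hk0] at this
    simpa using this.symm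
  -- orthogonal complement of K is in the kernel of Ap
  have hKperp_ker : ∀ w : Hp, w ∈ Kᗮ → ∃ hw : w ∈ Ap.domain, Ap ⟨w, hw⟩ = 0 := by
    intro w hw
    apply kerPerp_p
    intro y
    exact (Submodule.mem_orthogonal' K w).mp hw (Am y)
      (Rm.le_topologicalClosure (LinearMap.mem_range.mpr ⟨y, rfl⟩))
  have hK'perp_ker : ∀ w : Hm, w ∈ K'ᗮ → ∃ hw : w ∈ Am.domain, Am ⟨w, hw⟩ = 0 := by
    intro w hw
    apply kerPerp_m
    intro x
    exact (Submodule.mem_orthogonal' K' w).mp hw (Ap x)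
      (Rp.le_topologicalClosure (LinearMap.mem_range.mpr ⟨x, rfl⟩))
  -- the coercion facts
  have hKset : (K : Set Hp) = closure (Set.range fun y : Am.domain => Am y) := by
    rw [hK, Rm.topologicalClosure_coe, hRmset]
  have hK'set : (K' : Set Hm) = closure (Set.range fun x : Ap.domain => Ap x) := by
    rw [hK', Rp.topologicalClosure_coe, hRpset]
  -- the fundamental estimate
  have hest : ∃ c : ℝ, 0 < c ∧ ∀ x : Ap.domain, (x : Hp) ∈ K →
      ‖(x : Hp)‖ ≤ c * ‖(Ap x : Hm)‖ := by
    by_contra hc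
    push_neg at hc
    have hsel : ∀ n : ℕ, ∃ x : Ap.domain, (x : Hp) ∈ K ∧
        ((n : ℝ) + 1) * ‖(Ap x : Hm)‖ < ‖(x : Hp)‖ := by
      intro n
      obtain ⟨x, hxK, hlt⟩ := hc ((n : ℝ) + 1) (by positivity)
      exact ⟨x, hxK, hlt⟩
    choose x hxK hxlt using hsel
    have hxpos : ∀ n, 0 < ‖(x n : Hp)‖ := fun n =>
      lt_of_le_of_lt (by positivity) (hxlt n)
    -- normalize
    set z : ℕ → Ap.domain := fun n => ((‖(x n : Hp)‖⁻¹ : ℝ) : ℂ) • x n with hz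
    have hzcoe : ∀ n, ((z n : Hp)) = ((‖(x n : Hp)‖⁻¹ : ℝ) : ℂ) • (x n : Hp) := fun n => rfl
    have hznorm : ∀ n, ‖(z n : Hp)‖ = 1 := by
      intro n
      rw [hzcoe n, norm_smul]
      simp only [Complex.norm_real, Real.norm_eq_abs, abs_inv, abs_norm]
      exact inv_mul_cancel₀ (hxpos n).ne'
    have hApz : ∀ n, (Ap (z n) : Hm) = ((‖(x n : Hp)‖⁻¹ : ℝ) : ℂ) • (Ap (x n) : Hm) :=
      fun n => Ap.map_smul _ (x n)
    have hApznorm : ∀ n, ‖(Ap (z n) : Hm)‖ ≤ 1 / ((n : ℝ) + 1) := by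
      intro n
      rw [hApz n, norm_smul]
      simp only [Complex.norm_real, Real.norm_eq_abs, abs_inv, abs_norm]
      rw [div_eq_mul_inv, one_mul]
      have h1 : ‖(Ap (x n) : Hm)‖ ≤ ‖(x n : Hp)‖ / ((n:ℝ)+1) := by
        rw [le_div_iff₀ (by positivity)]
        nlinarith [hxlt n]
      calc ‖(x n : Hp)‖⁻¹ * ‖(Ap (x n) : Hm)‖
          ≤ ‖(x n : Hp)‖⁻¹ * (‖(x n : Hp)‖ / ((n:ℝ)+1)) := by
            exact mul_le_mul_of_nonneg_left h1 (by positivity)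
        _ = ((n:ℝ)+1)⁻¹ := by
            rw [← mul_div_assoc, inv_mul_cancel₀ (hxpos n).ne', one_div]
    have hzK : ∀ n, (z n : Hp) ∈ K := fun n => K.smul_mem _ (hxK n)
    have hzmem : ∀ n, (z n : Hp) ∈ closure (Set.range fun y : Am.domain => Am y) := by
      intro n; rw [← hKset]; exact hzK n
    have hzbdd : ∃ C : ℝ, ∀ n, ‖(z n : Hp)‖ + ‖(Ap (z n) : Hm)‖ ≤ C := by
      refine ⟨2, fun n => ?_⟩
      have := hApznorm n
      have h2 : (1:ℝ) / ((n:ℝ)+1) ≤ 1 := by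
        rw [div_le_one (by positivity)]; simp
      rw [hznorm n]; linarith
    obtain ⟨φ, l, hφ, hl⟩ := hpc z hzmem hzbdd
    have hlnorm : ‖l‖ = 1 := by
      have h3 : Tendsto (fun n => ‖(z (φ n) : Hp)‖) atTop (𝓝 ‖l‖) := hl.norm
      have h4 : Tendsto (fun n => ‖(z (φ n) : Hp)‖) atTop (𝓝 1) := by
        simp only [hznorm]; exact tendsto_const_nhds
      exact (tendsto_nhds_unique h3 h4)
    have hAp0 : Tendsto (fun n => (Ap (z (φ n)) : Hm)) atTop (𝓝 0) := by
      refine squeeze_zero_norm (fun n => ?_) tendsto_one_div_add_atTop_nhds_zero_nat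
      refine le_trans (hApznorm (φ n)) ?_
      apply div_le_div_of_nonneg_left (by norm_num) (by positivity)
      have := hφ.le_apply (x := n)
      exact add_le_add_left (Nat.cast_le.mpr this) 1
    obtain ⟨hlD, hl0⟩ := hclosedAp (fun n => z (φ n)) l 0 hl hAp0
    have hlK : l ∈ K := by
      have : IsClosed (K : Set Hp) := Rm.isClosed_topologicalClosure
      exact this.mem_of_tendsto hl (Filter.Eventually.of_forall fun n => hzK (φ n))
    have hlperp : (inner ℂ l l : ℂ) = 0 := by
      have hcl : ∀ w ∈ closure (Set.range fun y : Am.domain => Am y),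
          (inner ℂ l w : ℂ) = 0 := by
        have hclosed : IsClosed {w : Hp | (inner ℂ l w : ℂ) = 0} :=
          isClosed_eq (continuous_const.inner continuous_id) continuous_const
        apply hclosed.closure_subset_iff.mpr
        intro w hw
        exact orth_p l w ⟨hlD, hl0⟩ hw
      apply hcl
      rw [← hKset]
      exact hlK
    rw [inner_self_eq_zero] at hlperp
    rw [hlperp] at hlnorm
    simp at hlnorm
  obtain ⟨c, hc0, hc⟩ := hest
  -- project a domain element into K without changing its image
  have hproj : ∀ xt : Ap.domain, ∃ x : Ap.domain, (x : Hp) ∈ K ∧ (Ap x : Hm) = Ap xt := by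
    intro xt
    obtain ⟨hkD, hk0⟩ := hKperp_ker ((xt : Hp) - K.orthogonalProjectionOnto (xt : Hp))
      (Submodule.sub_starProjection_mem_orthogonal _)
    refine ⟨xt - ⟨_, hkD⟩, ?_, ?_⟩
    · have hco : ((xt - ⟨(xt : Hp) - K.orthogonalProjectionOnto (xt : Hp), hkD⟩ : Ap.domain) : Hp)
          = (K.orthogonalProjectionOnto (xt : Hp) : Hp) := by
        push_cast
        exact sub_sub_cancel _ _
      rw [hco]
      exact (K.orthogonalProjectionOnto (xt : Hp)).2
    · rw [Ap.map_sub, hk0, sub_zero]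
  -- range of Ap is closed
  have hSpclosed : IsClosed (Set.range fun x : Ap.domain => Ap x) := by
    refine isClosed_of_closure_subset ?_
    intro v hv
    obtain ⟨g, hgmem, hgv⟩ := mem_closure_iff_seq_limit.mp hv
    choose xt hxt using hgmem
    choose xx hxxK hxxAp using fun n => hproj (xt n)
    have hApxx : ∀ n, (Ap (xx n) : Hm) = g n := fun n => (hxxAp n).trans (hxt n)
    have hxxDiff : ∀ n m : ℕ, ‖(xx n : Hp) - (xx m : Hp)‖ ≤ c * ‖g n - g m‖ := by
      intro n m
      have h5 := hc (xx n - xx m) (K.sub_mem (hxxK n) (hxxK m))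
      rw [Ap.map_sub, hApxx n, hApxx m] at h5
      exact h5
    have hgc : CauchySeq g := hgv.cauchySeq
    have hxc : CauchySeq (fun n => (xx n : Hp)) := by
      rw [Metric.cauchySeq_iff] at hgc ⊢
      intro ε hε
      obtain ⟨N, hN⟩ := hgc (ε / c) (by positivity)
      refine ⟨N, fun m hm n hn => ?_⟩
      have h7 := hN m hm n hn
      rw [dist_eq_norm] at h7 ⊢
      calc ‖(xx m : Hp) - (xx n : Hp)‖ ≤ c * ‖g m - g n‖ := hxxDiff m n
        _ < c * (ε / c) := by exact (mul_lt_mul_iff_right₀ hc0).mpr h7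
        _ = ε := by field_simp
    obtain ⟨r, hr⟩ := cauchySeq_tendsto_of_complete hxc
    obtain ⟨hrD, hrv⟩ := hclosedAp xx r v hr (by simpa only [hApxx] using hgv)
    exact ⟨⟨r, hrD⟩, hrv⟩
  -- projection on the Hm side
  have hproj' : ∀ yt : Am.domain, ∃ y : Am.domain, (y : Hm) ∈ K' ∧ (Am y : Hp) = Am yt := by
    intro yt
    obtain ⟨hkD, hk0⟩ := hK'perp_ker ((yt : Hm) - K'.orthogonalProjectionOnto (yt : Hm))
      (Submodule.sub_starProjection_mem_orthogonal _)
    refine ⟨yt - ⟨_, hkD⟩, ?_, ?_⟩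
    · have hco : ((yt - ⟨(yt : Hm) - K'.orthogonalProjectionOnto (yt : Hm), hkD⟩ : Am.domain) : Hm)
          = (K'.orthogonalProjectionOnto (yt : Hm) : Hm) := by
        push_cast
        exact sub_sub_cancel _ _
      rw [hco]
      exact (K'.orthogonalProjectionOnto (yt : Hm)).2
    · rw [Am.map_sub, hk0, sub_zero]
  -- closure of the range of Am is contained in the range
  have hSmsub : closure (Set.range fun y : Am.domain => Am y)
      ⊆ Set.range fun y : Am.domain => Am y := by
    intro u hu
    obtain ⟨g, hgmem, hgu⟩ := mem_closure_iff_seq_limit.mp hu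
    choose yt hyt using hgmem
    choose yy hyyK hyyAm using fun n => hproj' (yt n)
    have hAmyy : ∀ n, (Am (yy n) : Hp) = g n := fun n => (hyyAm n).trans (hyt n)
    have hKpeq : (K' : Set Hm) = Set.range fun x : Ap.domain => Ap x := by
      rw [hK'set]; exact hSpclosed.closure_eq
    have hsel2 : ∀ n, ∃ x : Ap.domain, (x : Hp) ∈ K ∧ (Ap x : Hm) = (yy n : Hm) := by
      intro n
      have hmem2 : (yy n : Hm) ∈ Set.range fun x : Ap.domain => Ap x := by
        rw [← hKpeq]; exact hyyK n
      obtain ⟨xt, hxt⟩ := hmem2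
      obtain ⟨x, hxK2, hxAp⟩ := hproj xt
      exact ⟨x, hxK2, hxAp.trans hxt⟩
    choose xx hxxK hxxAp using hsel2
    have hyyDiff : ∀ n m : ℕ, ‖(yy n : Hm) - (yy m : Hm)‖ ≤ c * ‖g n - g m‖ := by
      intro n m
      set w : Am.domain := yy n - yy m with hw
      set xd : Ap.domain := xx n - xx m with hxd
      have hwcoe : (Ap xd : Hm) = (w : Hm) := by
        rw [hxd, Ap.map_sub, hxxAp n, hxxAp m, hw]
        simp
      have hAmw : (Am w : Hp) = g n - g m := by
        rw [Am.map_sub, hAmyy n, hAmyy m]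
      have hinner : (inner ℂ ((w : Hm)) ((w : Hm)) : ℂ) = inner ℂ (Am w : Hp) ((xd : Hp)) := by
        have hst : (inner ℂ ((w : Hm)) ((w : Hm)) : ℂ) = inner ℂ ((w : Hm)) (Ap xd : Hm) := by
          rw [hwcoe]
        rw [hst]
        exact (h₁s w xd).symm
      have hnormsq : ‖(w : Hm)‖ * ‖(w : Hm)‖ ≤ ‖(Am w : Hp)‖ * ‖(xd : Hp)‖ := by
        have e1 : ‖(w : Hm)‖ * ‖(w : Hm)‖ = RCLike.re (inner ℂ ((w:Hm)) ((w:Hm)) : ℂ) :=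
          (inner_self_eq_norm_mul_norm _).symm
        rw [e1, hinner]
        exact le_trans (le_trans (le_abs_self _) (RCLike.abs_re_le_norm _))
          (norm_inner_le_norm _ _)
      have hxdle : ‖(xd : Hp)‖ ≤ c * ‖(w : Hm)‖ := by
        have h6 := hc xd (K.sub_mem (hxxK n) (hxxK m))
        rw [hwcoe] at h6
        exact h6
      have hfin : ‖(w : Hm)‖ ≤ c * ‖(Am w : Hp)‖ := by
        rcases eq_or_lt_of_le (norm_nonneg ((w : Hm))) with h0 | h0
        · rw [← h0]; positivity
        · nlinarith [norm_nonneg (Am w : Hp), hnormsq, hxdle,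
            mul_le_mul_of_nonneg_left hxdle (norm_nonneg (Am w : Hp))]
      have hwco : (w : Hm) = (yy n : Hm) - (yy m : Hm) := by rw [hw]; simp
      rw [← hwco, ← hAmw]
      exact hfin
    have hgc : CauchySeq g := hgu.cauchySeq
    have hyc : CauchySeq (fun n => (yy n : Hm)) := by
      rw [Metric.cauchySeq_iff] at hgc ⊢
      intro ε hε
      obtain ⟨N, hN⟩ := hgc (ε / c) (by positivity)
      refine ⟨N, fun m hm n hn => ?_⟩
      have h7 := hN m hm n hn
      rw [dist_eq_norm] at h7 ⊢
      calc ‖(yy m : Hm) - (yy n : Hm)‖ ≤ c * ‖g m - g n‖ := hyyDiff m n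
        _ < c * (ε / c) := by exact (mul_lt_mul_iff_right₀ hc0).mpr h7
        _ = ε := by field_simp
    obtain ⟨ρ, hρ⟩ := cauchySeq_tendsto_of_complete hyc
    obtain ⟨hρD, hρu⟩ := hclosedAm yy ρ u hρ (by simpa only [hAmyy] using hgu)
    exact ⟨⟨ρ, hρD⟩, hρu⟩
  -- final assembly
  refine ⟨hSpclosed, isClosed_of_closure_subset hSmsub, ?_, orth_p, ?_, orth_m⟩
  · intro u
    refine ⟨u - K.orthogonalProjectionOnto u, K.orthogonalProjectionOnto u,
      hKperp_ker _ (Submodule.sub_starProjection_mem_orthogonal u), ?_, (sub_add_cancel u _).symm⟩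
    apply hSmsub
    rw [← hKset]
    exact (K.orthogonalProjectionOnto u).2
  · intro v
    refine ⟨v - K'.orthogonalProjectionOnto v, K'.orthogonalProjectionOnto v,
      hK'perp_ker _ (Submodule.sub_starProjection_mem_orthogonal v), ?_, (sub_add_cancel v _).symm⟩
    rw [← hSpclosed.closure_eq, ← hK'set]
    exact (K'.orthogonalProjectionOnto v).2
end

section
/- Let (A₊, A₋) be a dual pair in (H₊, H₋) having the partial compactness property. Then there exist constants c₊ > 0 and c₋ > 0 such that ‖x‖_{H₊} ≤ c₊ ‖A₊x‖_{H₋} for every x ∈ D(A₊) ∩ closure(range A₋), and ‖y‖_{H₋} ≤ c₋ ‖A₋y‖_{H₊} for every y ∈ D(A₋) ∩ closure(range A₊). -/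
open scoped InnerProductSpace ComplexConjugate
local notation "⟪" x ", " y "⟫" => @inner ℂ _ _ x y


/-- Let `(A₊, A₋)` be a dual pair in `(H₊, H₋)` (densely defined mutually
adjoint operators) having the partial compactness property.  Then there are constants
`c₊ > 0` and `c₋ > 0` such that `‖x‖ ≤ c₊ ‖A₊ x‖` for every `x ∈ D(A₊) ∩ closure (range A₋)`
and `‖y‖ ≤ c₋ ‖A₋ y‖` for every `y ∈ D(A₋) ∩ closure (range A₊)`. -/
theorem stmt_2
    {Hp Hm : Type*}
    [NormedAddCommGroup Hp] [InnerProductSpace ℂ Hp] [CompleteSpace Hp]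
    [NormedAddCommGroup Hm] [InnerProductSpace ℂ Hm] [CompleteSpace Hm]
    (Ap : Hp →ₗ.[ℂ] Hm) (Am : Hm →ₗ.[ℂ] Hp)
    (hApdense : Dense (Ap.domain : Set Hp)) (hAmdense : Dense (Am.domain : Set Hm))
    (hadj₁ : Ap.adjoint = Am) (hadj₂ : Am.adjoint = Ap)
    -- partial compactness property
    (hpc : ∀ x : ℕ → Ap.domain,
      (∀ n, (x n : Hp) ∈ closure (Set.range fun y : Am.domain => Am y)) →
      (∃ C : ℝ, ∀ n, ‖(x n : Hp)‖ + ‖Ap (x n)‖ ≤ C) →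
      ∃ (φ : ℕ → ℕ) (l : Hp), StrictMono φ ∧
        Filter.Tendsto (fun n => (x (φ n) : Hp)) Filter.atTop (nhds l)) :
    (∃ cp : ℝ, 0 < cp ∧ ∀ x : Ap.domain,
      (x : Hp) ∈ closure (Set.range fun y : Am.domain => Am y) →
      ‖(x : Hp)‖ ≤ cp * ‖Ap x‖) ∧
    (∃ cm : ℝ, 0 < cm ∧ ∀ y : Am.domain,
      (y : Hm) ∈ closure (Set.range fun x : Ap.domain => Ap x) →
      ‖(y : Hm)‖ ≤ cm * ‖Am y‖) := by
  subst hadj₂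
  set S : Set Hp := Set.range fun y : Am.domain => Am y with hSdef
  set K : Submodule ℂ Hp := (LinearMap.range Am.toFun).topologicalClosure with hKdef
  have hSsub : S = ((LinearMap.range Am.toFun : Submodule ℂ Hp) : Set Hp) := by
    rw [LinearMap.coe_range]; rfl
  have hclS : closure S = (K : Set Hp) := by
    rw [hSsub, hKdef, Submodule.topologicalClosure_coe]
  -- formal adjoint relation
  have hfa : ∀ (x : Am.adjoint.domain) (y : Am.domain),
      ⟪(Am.adjoint x : Hm), (y : Hm)⟫ = ⟪(x : Hp), Am y⟫ :=
    LinearPMap.adjoint_isFormalAdjoint hAmdense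
  -- vectors orthogonal to the range of Am are in the kernel of the adjoint
  have lemA : ∀ z : Hp, (∀ y : Am.domain, ⟪z, Am y⟫ = 0) →
      ∃ hz : z ∈ Am.adjoint.domain, Am.adjoint ⟨z, hz⟩ = 0 := by
    intro z hz
    have hmem : z ∈ Am.adjoint.domain :=
      LinearPMap.mem_adjoint_domain_of_exists z ⟨0, fun x => by simp [hz x]⟩
    exact ⟨hmem, LinearPMap.adjoint_apply_eq hAmdense ⟨z, hmem⟩ (fun x => by simp [hz x])⟩
  have part1 : ∃ cp : ℝ, 0 < cp ∧ ∀ x : Am.adjoint.domain,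
      (x : Hp) ∈ closure S → ‖(x : Hp)‖ ≤ cp * ‖Am.adjoint x‖ := by
    by_contra h
    push_neg at h
    have hx : ∀ n : ℕ, ∃ x : Am.adjoint.domain, (x : Hp) ∈ closure S ∧
        ((n : ℝ) + 1) * ‖Am.adjoint x‖ < ‖(x : Hp)‖ := by
      intro n
      obtain ⟨x, hx1, hx2⟩ := h ((n : ℝ) + 1) (by positivity)
      exact ⟨x, hx1, hx2⟩
    choose x hxm hxlt using hx
    have hxpos : ∀ n, 0 < ‖(x n : Hp)‖ := fun n =>
      lt_of_le_of_lt (by positivity) (hxlt n)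
    set u : ℕ → Am.adjoint.domain := fun n => ((‖(x n : Hp)‖⁻¹ : ℝ) : ℂ) • x n with hu
    have hucoe : ∀ n, (u n : Hp) = ((‖(x n : Hp)‖⁻¹ : ℝ) : ℂ) • (x n : Hp) := fun n => rfl
    have hnc : ∀ n, ‖(((‖(x n : Hp)‖⁻¹ : ℝ)) : ℂ)‖ = ‖(x n : Hp)‖⁻¹ := by
      intro n
      rw [Complex.norm_real, Real.norm_eq_abs, abs_of_nonneg (by positivity)]
    have hunorm : ∀ n, ‖(u n : Hp)‖ = 1 := by
      intro n
      rw [hucoe, norm_smul, hnc, inv_mul_cancel₀ (hxpos n).ne']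
    have hAu : ∀ n, ‖Am.adjoint (u n)‖ ≤ 1 / ((n : ℝ) + 1) := by
      intro n
      have h1 : Am.adjoint (u n) = ((‖(x n : Hp)‖⁻¹ : ℝ) : ℂ) • Am.adjoint (x n) :=
        Am.adjoint.map_smul _ _
      rw [h1, norm_smul, hnc]
      have h2 : ‖Am.adjoint (x n)‖ / ‖(x n : Hp)‖ ≤ 1 / ((n : ℝ) + 1) := by
        rw [div_le_div_iff₀ (hxpos n) (by positivity)]
        nlinarith [hxlt n]
      calc ‖(x n : Hp)‖⁻¹ * ‖Am.adjoint (x n)‖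
          = ‖Am.adjoint (x n)‖ / ‖(x n : Hp)‖ := by ring
        _ ≤ 1 / ((n : ℝ) + 1) := h2
    have humem : ∀ n, (u n : Hp) ∈ closure S := by
      intro n
      rw [hclS]
      have := hxm n
      rw [hclS] at this
      exact K.smul_mem _ this
    obtain ⟨φ, l, hφ, hl⟩ := hpc u humem ⟨2, by
      intro n
      have := hAu n
      have h1 : 1 / ((n : ℝ) + 1) ≤ 1 := by
        rw [div_le_one (by positivity)]; linarith [Nat.cast_nonneg (α := ℝ) n]
      rw [hunorm n]; linarith⟩
    have hlnorm : ‖l‖ = 1 := by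
      have h1 := hl.norm
      simp only [hunorm] at h1
      exact tendsto_nhds_unique h1 tendsto_const_nhds
    have hA0 : Filter.Tendsto (fun n => Am.adjoint (u (φ n))) Filter.atTop (nhds 0) := by
      rw [tendsto_zero_iff_norm_tendsto_zero]
      apply squeeze_zero (fun n => norm_nonneg _) (g := fun n : ℕ => 1 / ((n : ℝ) + 1))
      · intro n
        refine le_trans (hAu (φ n)) ?_
        apply one_div_le_one_div_of_le (by positivity)
        have hle : (n : ℝ) ≤ (φ n : ℝ) := Nat.cast_le.mpr hφ.le_apply
        linarith
      · exact tendsto_one_div_add_atTop_nhds_zero_nat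
    have hlorth : ∀ y : Am.domain, ⟪l, Am y⟫ = 0 := by
      intro y
      have h1 : Filter.Tendsto (fun n => ⟪(u (φ n) : Hp), Am y⟫) Filter.atTop
          (nhds ⟪l, Am y⟫) := hl.inner tendsto_const_nhds
      have h2 : Filter.Tendsto (fun n => ⟪(u (φ n) : Hp), Am y⟫) Filter.atTop (nhds 0) := by
        have heq : (fun n => ⟪(u (φ n) : Hp), Am y⟫)
            = fun n => ⟪(Am.adjoint (u (φ n)) : Hm), (y : Hm)⟫ :=
          funext fun n => (hfa (u (φ n)) y).symm
        rw [heq]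
        simpa using hA0.inner (tendsto_const_nhds (x := (y : Hm)))
      exact tendsto_nhds_unique h1 h2
    have hlK : l ∈ closure S :=
      isClosed_closure.mem_of_tendsto hl (Filter.Eventually.of_forall fun n => humem (φ n))
    have hl0 : l = 0 := by
      have hzero : ⟪l, l⟫ = 0 := by
        have hclosed : IsClosed {z : Hp | ⟪l, z⟫ = 0} :=
          isClosed_eq (Continuous.inner continuous_const continuous_id) continuous_const
        have hsub : S ⊆ {z : Hp | ⟪l, z⟫ = 0} := by
          rintro _ ⟨y, rfl⟩; exact hlorth y
        exact closure_minimal hsub hclosed hlK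
      exact inner_self_eq_zero.mp hzero
    rw [hl0, norm_zero] at hlnorm
    norm_num at hlnorm
  obtain ⟨cp, hcp, hp1⟩ := part1
  refine ⟨⟨cp, hcp, hp1⟩, ⟨cp, hcp, ?_⟩⟩
  intro y hy
  have key : ∀ x : Am.adjoint.domain,
      ‖⟪(y : Hm), (Am.adjoint x : Hm)⟫‖ ≤ cp * ‖Am y‖ * ‖(Am.adjoint x : Hm)‖ := by
    intro x
    set P : Hp := (K.orthogonalProjectionOnto (x : Hp) : Hp) with hPdef
    have hzK : (x : Hp) - P ∈ Kᗮ := K.sub_starProjection_mem_orthogonal _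
    have hzorth : ∀ y' : Am.domain, ⟪(x : Hp) - P, Am y'⟫ = 0 := by
      intro y'
      have hmem : Am y' ∈ K :=
        Submodule.le_topologicalClosure _ (LinearMap.mem_range_self _ y')
      have h0 := (Submodule.mem_orthogonal _ _).mp hzK _ hmem
      rw [← inner_conj_symm, h0, map_zero]
    obtain ⟨hzdom, hz0⟩ := lemA ((x : Hp) - P) hzorth
    set x₀ : Am.adjoint.domain := x - ⟨(x : Hp) - P, hzdom⟩ with hx₀
    have hx₀coe : (x₀ : Hp) = P := by
      rw [hx₀]; simp
    have hAx₀ : Am.adjoint x₀ = Am.adjoint x := by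
      rw [hx₀, Am.adjoint.map_sub, hz0, sub_zero]
    have hx₀mem : (x₀ : Hp) ∈ closure S := by
      rw [hclS, hx₀coe]
      exact (K.orthogonalProjectionOnto (x : Hp)).2
    have hb := hp1 x₀ hx₀mem
    have heq : ⟪(y : Hm), (Am.adjoint x : Hm)⟫ = ⟪(Am y : Hp), (x₀ : Hp)⟫ := by
      rw [← hAx₀, ← inner_conj_symm, hfa x₀ y, inner_conj_symm]
    rw [heq]
    calc ‖⟪(Am y : Hp), (x₀ : Hp)⟫‖ ≤ ‖Am y‖ * ‖(x₀ : Hp)‖ := norm_inner_le_norm _ _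
      _ ≤ ‖Am y‖ * (cp * ‖Am.adjoint x₀‖) := by
          exact mul_le_mul_of_nonneg_left hb (norm_nonneg _)
      _ = cp * ‖Am y‖ * ‖Am.adjoint x‖ := by rw [hAx₀]; ring
  obtain ⟨f, hfmem, hft⟩ := mem_closure_iff_seq_limit.mp hy
  choose g hg using hfmem
  have h1 : Filter.Tendsto (fun n => ‖⟪(y : Hm), f n⟫‖) Filter.atTop
      (nhds ‖⟪(y : Hm), (y : Hm)⟫‖) := (tendsto_const_nhds.inner hft).norm
  have h3 : Filter.Tendsto (fun n => cp * ‖Am y‖ * ‖f n‖) Filter.atTop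
      (nhds (cp * ‖Am y‖ * ‖(y : Hm)‖)) := tendsto_const_nhds.mul hft.norm
  have h2 : ∀ n, ‖⟪(y : Hm), f n⟫‖ ≤ cp * ‖Am y‖ * ‖f n‖ := by
    intro n
    rw [← hg n]
    exact key (g n)
  have hfin : ‖⟪(y : Hm), (y : Hm)⟫‖ ≤ cp * ‖Am y‖ * ‖(y : Hm)‖ :=
    le_of_tendsto_of_tendsto' h1 h3 h2
  have hsq : ‖(y : Hm)‖ * ‖(y : Hm)‖ ≤ cp * ‖Am y‖ * ‖(y : Hm)‖ := by
    refine le_trans ?_ hfin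
    rw [← inner_self_eq_norm_mul_norm (𝕜 := ℂ)]
    exact RCLike.re_le_norm _
  rcases eq_or_lt_of_le (norm_nonneg (y : Hm)) with h0 | h0
  · rw [← h0]; positivity
  · exact le_of_mul_le_mul_right hsq h0
end

section
/- Let (A₊, A₋) be a dual pair in (H₊, H₋) having the partial compactness property. Then the symmetric compactness statement on the other side also holds: every sequence (y_n) with y_n ∈ D(A₋) ∩ closure(range A₊) and sup_n (‖y_n‖_{H₋} + ‖A₋y_n‖_{H₊}) < ∞ has a subsequence that converges in H₋. -/
open scoped InnerProductSpace ComplexConjugate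
open Filter


/-- Let `(A₊, A₋)` be a dual pair in `(H₊, H₋)` (densely defined mutually
adjoint operators) having the partial compactness property.  Then the symmetric compactness
statement holds on the other side:  every sequence `(y_n)` in `D(A₋) ∩ closure (range A₊)`
with bounded graph norms has a subsequence converging in `H₋`. -/
theorem stmt_3
    {Hp Hm : Type*}
    [NormedAddCommGroup Hp] [InnerProductSpace ℂ Hp] [CompleteSpace Hp]
    [NormedAddCommGroup Hm] [InnerProductSpace ℂ Hm] [CompleteSpace Hm]
    (Ap : Hp →ₗ.[ℂ] Hm) (Am : Hm →ₗ.[ℂ] Hp)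
    (hApdense : Dense (Ap.domain : Set Hp)) (hAmdense : Dense (Am.domain : Set Hm))
    (hadj₁ : Ap.adjoint = Am) (hadj₂ : Am.adjoint = Ap)
    -- partial compactness property
    (hpc : ∀ x : ℕ → Ap.domain,
      (∀ n, (x n : Hp) ∈ closure (Set.range fun y : Am.domain => Am y)) →
      (∃ C : ℝ, ∀ n, ‖(x n : Hp)‖ + ‖Ap (x n)‖ ≤ C) →
      ∃ (φ : ℕ → ℕ) (l : Hp), StrictMono φ ∧
        Filter.Tendsto (fun n => (x (φ n) : Hp)) Filter.atTop (nhds l)) :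
    ∀ y : ℕ → Am.domain,
      (∀ n, (y n : Hm) ∈ closure (Set.range fun x : Ap.domain => Ap x)) →
      (∃ C : ℝ, ∀ n, ‖(y n : Hm)‖ + ‖Am (y n)‖ ≤ C) →
      ∃ (φ : ℕ → ℕ) (l : Hm), StrictMono φ ∧
        Filter.Tendsto (fun n => (y (φ n) : Hm)) Filter.atTop (nhds l) := by
  subst hadj₂
  set Ap := Am.adjoint with hAp
  intro y hyR hyB
  obtain ⟨C, hC⟩ := hyB
  set Rm : Submodule ℂ Hp := LinearMap.range Am.toFun with hRmdef
  have hSrange : (Set.range fun yy : Am.domain => Am yy) = (Rm : Set Hp) := rfl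
  have hFA : Ap.IsFormalAdjoint Am := LinearPMap.adjoint_isFormalAdjoint hAmdense
  -- closedness of Ap on sequences
  have hclosed : ∀ (x : ℕ → Ap.domain) (xl : Hp) (zl : Hm),
      Filter.Tendsto (fun n => (x n : Hp)) atTop (nhds xl) →
      Filter.Tendsto (fun n => Ap (x n)) atTop (nhds zl) →
      ∃ hxl : xl ∈ Ap.domain, Ap ⟨xl, hxl⟩ = zl := by
    intro x xl zl hx hz
    have key : ∀ u : Am.domain, ⟪zl, (u : Hm)⟫_ℂ = ⟪xl, Am u⟫_ℂ := by
      intro u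
      have h1 : Tendsto (fun n => ⟪Ap (x n), (u : Hm)⟫_ℂ) atTop (nhds ⟪zl, (u : Hm)⟫_ℂ) :=
        hz.inner tendsto_const_nhds
      have h2 : Tendsto (fun n => ⟪(x n : Hp), Am u⟫_ℂ) atTop (nhds ⟪xl, Am u⟫_ℂ) :=
        hx.inner tendsto_const_nhds
      have h3 : (fun n => ⟪Ap (x n), (u : Hm)⟫_ℂ) = fun n => ⟪(x n : Hp), Am u⟫_ℂ := by
        funext n; exact hFA (x n) u
      rw [h3] at h1
      exact tendsto_nhds_unique h1 h2
    have hmem : xl ∈ Ap.domain :=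
      LinearPMap.mem_adjoint_domain_of_exists (T := Am) xl ⟨zl, key⟩
    exact ⟨hmem, LinearPMap.adjoint_apply_eq hAmdense ⟨xl, hmem⟩ key⟩
  -- Poincaré inequality
  have hpoin : ∃ c : ℝ, 0 < c ∧ ∀ x : Ap.domain, (x : Hp) ∈ closure (Rm : Set Hp) →
      ‖(x : Hp)‖ ≤ c * ‖Ap x‖ := by
    by_contra hcon
    push_neg at hcon
    have hsel0 : ∀ n : ℕ, ∃ x : Ap.domain, (x : Hp) ∈ closure (Rm : Set Hp) ∧
        ((n : ℝ) + 1) * ‖Ap x‖ < ‖(x : Hp)‖ := by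
      intro n
      obtain ⟨x, hx1, hx2⟩ := hcon ((n : ℝ) + 1) (by positivity)
      exact ⟨x, hx1, hx2⟩
    choose X hXmem hXlt using hsel0
    have hXpos : ∀ n, 0 < ‖(X n : Hp)‖ := by
      intro n
      have := hXlt n
      nlinarith [norm_nonneg (Ap (X n)), norm_nonneg ((X n : Hp))]
    set xs : ℕ → Ap.domain := fun n => ((‖(X n : Hp)‖⁻¹ : ℝ) : ℂ) • X n with hxsdef
    have hxsnorm : ∀ n, ‖(xs n : Hp)‖ = 1 := by
      intro n
      have hcoe : (xs n : Hp) = ((‖(X n : Hp)‖⁻¹ : ℝ) : ℂ) • (X n : Hp) := rfl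
      rw [hcoe, norm_smul, Complex.norm_real, Real.norm_eq_abs,
        abs_of_nonneg (by positivity)]
      exact inv_mul_cancel₀ (hXpos n).ne'
    have hxsmem : ∀ n, (xs n : Hp) ∈ closure (Rm : Set Hp) := by
      intro n
      rw [← Submodule.topologicalClosure_coe]
      exact Submodule.smul_mem _ _ (by rw [← SetLike.mem_coe, Submodule.topologicalClosure_coe]; exact hXmem n)
    have hxsap : ∀ n, ‖Ap (xs n)‖ ≤ ((n : ℝ) + 1)⁻¹ := by
      intro n
      have h1 : Ap (xs n) = ((‖(X n : Hp)‖⁻¹ : ℝ) : ℂ) • Ap (X n) := Ap.map_smul _ _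
      rw [h1, norm_smul, Complex.norm_real, Real.norm_eq_abs, abs_of_nonneg (by positivity)]
      rw [mul_comm, ← div_eq_mul_inv, ← one_div,
        div_le_div_iff₀ (hXpos n) (by positivity : (0:ℝ) < (n:ℝ) + 1)]
      nlinarith [(hXlt n).le, norm_nonneg (Ap (X n))]
    obtain ⟨φ, l, hφ, hconv⟩ := hpc xs hxsmem ⟨2, fun n => by
      have := hxsap n
      have h2 : ((n : ℝ) + 1)⁻¹ ≤ 1 := by
        rw [inv_le_one_iff₀]; right; linarith [Nat.cast_nonneg (α := ℝ) n]
      rw [hxsnorm n]; linarith⟩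
    have hlnorm : ‖l‖ = 1 := by
      have h1 : Tendsto (fun n => ‖(xs (φ n) : Hp)‖) atTop (nhds ‖l‖) := hconv.norm
      have h2 : (fun n => ‖(xs (φ n) : Hp)‖) = fun _ => (1 : ℝ) := funext fun n => hxsnorm _
      rw [h2] at h1
      exact tendsto_nhds_unique h1 tendsto_const_nhds
    have hapzero : Tendsto (fun n => Ap (xs (φ n))) atTop (nhds 0) := by
      rw [tendsto_zero_iff_norm_tendsto_zero]
      apply squeeze_zero (fun n => norm_nonneg _) (fun n => hxsap (φ n))
      have h1 : Tendsto (fun n : ℕ => ((n : ℝ) + 1)⁻¹) atTop (nhds 0) :=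
        tendsto_one_div_add_atTop_nhds_zero_nat.congr (fun n => by rw [one_div])
      exact h1.comp (hφ.tendsto_atTop)
    obtain ⟨hl, hl0⟩ := hclosed (fun n => xs (φ n)) l 0 hconv hapzero
    -- l ∈ Rmᗮ
    have hlperp : l ∈ Rmᗮ := by
      rw [Submodule.mem_orthogonal']
      rintro _ ⟨w, rfl⟩
      have := hFA ⟨l, hl⟩ w
      rw [hl0, inner_zero_left] at this
      exact this.symm
    have hlclos : l ∈ Rm.topologicalClosure := by
      rw [← SetLike.mem_coe, Submodule.topologicalClosure_coe]
      exact isClosed_closure.mem_of_tendsto hconv (Filter.Eventually.of_forall fun n => hxsmem _)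
    have : l = 0 := by
      rw [← Submodule.orthogonal_orthogonal_eq_closure] at hlclos
      have := hlclos l hlperp
      exact inner_self_eq_zero.mp this
    rw [this, norm_zero] at hlnorm
    exact zero_ne_one hlnorm
  obtain ⟨c, hcpos, hcineq⟩ := hpoin
  -- kernel facts: Rmᗮ ⊆ ker Ap
  have hKmem : ∀ v ∈ Rmᗮ, ∃ hv : v ∈ Ap.domain, Ap ⟨v, hv⟩ = 0 := by
    intro v hv
    have key : ∀ u : Am.domain, ⟪(0 : Hm), (u : Hm)⟫_ℂ = ⟪v, Am u⟫_ℂ := by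
      intro u
      rw [inner_zero_left]
      exact ((Submodule.mem_orthogonal' Rm v).mp hv (Am u) (LinearMap.mem_range_self _ u)).symm
    have hmem : v ∈ Ap.domain :=
      LinearPMap.mem_adjoint_domain_of_exists (T := Am) v ⟨0, key⟩
    exact ⟨hmem, LinearPMap.adjoint_apply_eq hAmdense ⟨v, hmem⟩ key⟩
  haveI : CompleteSpace (Rmᗮ : Submodule ℂ Hp) := (Submodule.isClosed_orthogonal _).completeSpace_coe
  haveI : Submodule.HasOrthogonalProjection (Rmᗮ : Submodule ℂ Hp) := Submodule.HasOrthogonalProjection.ofCompleteSpace _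
  have hreduce : ∀ v : Ap.domain, ∃ w : Ap.domain,
      (w : Hp) ∈ closure (Rm : Set Hp) ∧ Ap w = Ap v := by
    intro v
    obtain ⟨hp, hap⟩ := hKmem (Submodule.orthogonalProjectionOnto Rmᗮ (v : Hp) : Hp) (Submodule.coe_mem _)
    refine ⟨v - ⟨_, hp⟩, ?_, ?_⟩
    · have h1 : (v : Hp) - (Submodule.orthogonalProjectionOnto Rmᗮ (v : Hp) : Hp) ∈ Rmᗮᗮ :=
        Submodule.sub_starProjection_mem_orthogonal (K := Rmᗮ) (v : Hp)
      rw [Submodule.orthogonal_orthogonal_eq_closure] at h1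
      rw [← Submodule.topologicalClosure_coe]
      exact h1
    · rw [Ap.map_sub, hap, sub_zero]
  -- selection
  have hsel : ∀ z ∈ closure (Set.range fun x : Ap.domain => Ap x),
      ∃ uu : Ap.domain, (uu : Hp) ∈ closure (Rm : Set Hp) ∧ Ap uu = z := by
    intro z hz
    obtain ⟨g, hgmem, hgtend⟩ := mem_closure_iff_seq_limit.mp hz
    choose v hv using hgmem
    have hv' : ∀ k, Ap (v k) = g k := hv
    choose w hwmem hwval using fun k => hreduce (v k)
    have hgc : CauchySeq g := hgtend.cauchySeq
    have hwc : CauchySeq (fun k => (w k : Hp)) := by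
      rw [Metric.cauchySeq_iff]
      intro ε hε
      rw [Metric.cauchySeq_iff] at hgc
      obtain ⟨N, hN⟩ := hgc (ε / c) (by positivity)
      refine ⟨N, fun a ha b hb => ?_⟩
      have h1 : ‖((w a - w b : Ap.domain) : Hp)‖ ≤ c * ‖Ap (w a - w b)‖ := by
        apply hcineq
        rw [← Submodule.topologicalClosure_coe]
        apply Submodule.sub_mem
        · rw [← SetLike.mem_coe, Submodule.topologicalClosure_coe]; exact hwmem a
        · rw [← SetLike.mem_coe, Submodule.topologicalClosure_coe]; exact hwmem b
      rw [Ap.map_sub, hwval a, hwval b, hv' a, hv' b] at h1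
      have h2 : dist (g a) (g b) < ε / c := hN a ha b hb
      rw [dist_eq_norm] at h2 ⊢
      have h3 : ((w a - w b : Ap.domain) : Hp) = (w a : Hp) - (w b : Hp) := rfl
      rw [h3] at h1
      calc ‖(w a : Hp) - (w b : Hp)‖ ≤ c * ‖g a - g b‖ := h1
        _ < c * (ε / c) := by exact mul_lt_mul_of_pos_left h2 hcpos
        _ = ε := by field_simp
    obtain ⟨u₀, hu₀⟩ := cauchySeq_tendsto_of_complete hwc
    have haptend : Tendsto (fun k => Ap (w k)) atTop (nhds z) := by
      have : (fun k => Ap (w k)) = g := funext fun k => by rw [hwval k, hv' k]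
      rw [this]; exact hgtend
    obtain ⟨hu₀mem, hu₀val⟩ := hclosed w u₀ z hu₀ haptend
    refine ⟨⟨u₀, hu₀mem⟩, ?_, hu₀val⟩
    exact isClosed_closure.mem_of_tendsto hu₀ (Filter.Eventually.of_forall fun k => hwmem k)
  -- choose preimages
  choose u humem huval using fun n => hsel (y n) (hyR n)
  have hCnonneg : 0 ≤ C := le_trans (by positivity) (hC 0)
  have hynorm : ∀ n, ‖(y n : Hm)‖ ≤ C := fun n =>
    le_trans (le_add_of_nonneg_right (norm_nonneg _)) (hC n)
  have hAmnorm : ∀ n, ‖Am (y n)‖ ≤ C := fun n =>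
    le_trans (le_add_of_nonneg_left (norm_nonneg _)) (hC n)
  have hub : ∀ n, ‖(u n : Hp)‖ + ‖Ap (u n)‖ ≤ c * C + C := by
    intro n
    have h1 : ‖(u n : Hp)‖ ≤ c * ‖Ap (u n)‖ := hcineq (u n) (humem n)
    have h2 : ‖Ap (u n)‖ = ‖(y n : Hm)‖ := by rw [huval n]
    rw [h2] at h1 ⊢
    have := hynorm n
    nlinarith
  obtain ⟨φ, l, hφ, hconv⟩ := hpc u (fun n => by rw [hSrange]; exact humem n) ⟨c * C + C, hub⟩
  -- y ∘ φ is Cauchy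
  have hkey : ∀ a b : ℕ, ‖(y a : Hm) - (y b : Hm)‖ ^ 2 ≤ 2 * C * ‖(u a : Hp) - (u b : Hp)‖ := by
    intro a b
    have hd : (y a : Hm) - (y b : Hm) = Ap (u a - u b) := by
      rw [Ap.map_sub, huval a, huval b]
    have h1 : ⟪(y a : Hm) - (y b : Hm), (y a : Hm) - (y b : Hm)⟫_ℂ
        = ⟪((u a - u b : Ap.domain) : Hp), Am (y a - y b)⟫_ℂ := by
      have h0 := hFA (u a - u b) (y a - y b)
      rw [← hd] at h0
      rw [← h0]
      congr 1
    have h2 : ‖(y a : Hm) - (y b : Hm)‖ ^ 2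
        = RCLike.re ⟪(y a : Hm) - (y b : Hm), (y a : Hm) - (y b : Hm)⟫_ℂ :=
      (inner_self_eq_norm_sq _).symm
    rw [h2, h1]
    calc RCLike.re ⟪((u a - u b : Ap.domain) : Hp), Am (y a - y b)⟫_ℂ
        ≤ ‖((u a - u b : Ap.domain) : Hp)‖ * ‖Am (y a - y b)‖ := re_inner_le_norm _ _
      _ ≤ ‖(u a : Hp) - (u b : Hp)‖ * (2 * C) := by
          apply mul_le_mul
          · simp
          · rw [Am.map_sub]
            calc ‖Am (y a) - Am (y b)‖ ≤ ‖Am (y a)‖ + ‖Am (y b)‖ := norm_sub_le _ _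
              _ ≤ 2 * C := by have := hAmnorm a; have := hAmnorm b; linarith
          · exact norm_nonneg _
          · exact norm_nonneg _
      _ = 2 * C * ‖(u a : Hp) - (u b : Hp)‖ := by ring
  have hcauchy : CauchySeq (fun n => (y (φ n) : Hm)) := by
    rw [Metric.cauchySeq_iff]
    intro ε hε
    have hucauchy := hconv.cauchySeq
    rw [Metric.cauchySeq_iff] at hucauchy
    obtain ⟨N, hN⟩ := hucauchy (ε ^ 2 / (2 * C + 1)) (by positivity)
    refine ⟨N, fun a ha b hb => ?_⟩
    have h1 := hkey (φ a) (φ b)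
    have h2 := hN a ha b hb
    rw [dist_eq_norm] at h2 ⊢
    have h3 : ‖(y (φ a) : Hm) - (y (φ b) : Hm)‖ ^ 2 < ε ^ 2 := by
      have h4 : 2 * C * ‖(u (φ a) : Hp) - (u (φ b) : Hp)‖ ≤ 2 * C * (ε ^ 2 / (2 * C + 1)) :=
        mul_le_mul_of_nonneg_left h2.le (by linarith)
      have h5 : 2 * C * (ε ^ 2 / (2 * C + 1)) < ε ^ 2 := by
        have h6 : 2 * C / (2 * C + 1) < 1 := (div_lt_one (by linarith)).mpr (by linarith)
        calc 2 * C * (ε ^ 2 / (2 * C + 1)) = (2 * C / (2 * C + 1)) * ε ^ 2 := by ring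
          _ < 1 * ε ^ 2 := mul_lt_mul_of_pos_right h6 (by positivity)
          _ = ε ^ 2 := one_mul _
      linarith
    exact lt_of_pow_lt_pow_left₀ 2 hε.le h3
  obtain ⟨l', hl'⟩ := cauchySeq_tendsto_of_complete hcauchy
  exact ⟨φ, l', hφ, hl'⟩
end

section
/- Let (A₊, A₋) be a dual pair in (H₊, H₋) having the partial compactness property. Then for every y ∈ closure(range A₋) ⊆ H₊ there exists a unique x ∈ D(A₊) ∩ closure(range A₋) such that A₊x ∈ D(A₋) and A₋(A₊x) = y. Moreover there is a constant c > 0, independent of y, such that this solution satisfies ‖x‖_{H₊} + ‖A₊x‖_{H₋} ≤ c ‖y‖_{H₊}. -/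
open LinearPMap Filter

private theorem pmap_congr {R E F : Type*} [Ring R] [AddCommGroup E] [Module R E]
    [AddCommGroup F] [Module R F] {T S : E →ₗ.[R] F} (h : T = S) (x : E) (hx : x ∈ T.domain)
    (hx' : x ∈ S.domain) : T ⟨x, hx⟩ = S ⟨x, hx'⟩ := by subst h; rfl

set_option maxHeartbeats 1000000 in
/-- Let `(A₊, A₋)` be a dual pair in `(H₊, H₋)` (densely defined mutually
adjoint operators) having the partial compactness property.  Then for every
`y ∈ closure (range A₋)` there is a unique `x ∈ D(A₊) ∩ closure (range A₋)` with
`A₊ x ∈ D(A₋)` and `A₋ (A₊ x) = y`, and this solution satisfies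
`‖x‖ + ‖A₊ x‖ ≤ c ‖y‖` with a constant `c > 0` independent of `y`. -/
theorem stmt_5
    {Hp Hm : Type*}
    [NormedAddCommGroup Hp] [InnerProductSpace ℂ Hp] [CompleteSpace Hp]
    [NormedAddCommGroup Hm] [InnerProductSpace ℂ Hm] [CompleteSpace Hm]
    (Ap : Hp →ₗ.[ℂ] Hm) (Am : Hm →ₗ.[ℂ] Hp)
    (hApdense : Dense (Ap.domain : Set Hp)) (hAmdense : Dense (Am.domain : Set Hm))
    (hadj₁ : Ap.adjoint = Am) (hadj₂ : Am.adjoint = Ap)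
    -- partial compactness property
    (hpc : ∀ x : ℕ → Ap.domain,
      (∀ n, (x n : Hp) ∈ closure (Set.range fun y : Am.domain => Am y)) →
      (∃ C : ℝ, ∀ n, ‖(x n : Hp)‖ + ‖Ap (x n)‖ ≤ C) →
      ∃ (φ : ℕ → ℕ) (l : Hp), StrictMono φ ∧
        Filter.Tendsto (fun n => (x (φ n) : Hp)) Filter.atTop (nhds l)) :
    ∃ c : ℝ, 0 < c ∧
      ∀ y ∈ closure (Set.range fun z : Am.domain => Am z),
        ∃ x : Hp,
          (x ∈ closure (Set.range fun z : Am.domain => Am z) ∧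
            ∃ hx : x ∈ Ap.domain, ∃ hAx : Ap ⟨x, hx⟩ ∈ Am.domain,
              Am ⟨Ap ⟨x, hx⟩, hAx⟩ = y ∧
              ‖x‖ + ‖Ap ⟨x, hx⟩‖ ≤ c * ‖y‖) ∧
          ∀ x' : Hp,
            (x' ∈ closure (Set.range fun z : Am.domain => Am z) ∧
              ∃ hx' : x' ∈ Ap.domain, ∃ hAx' : Ap ⟨x', hx'⟩ ∈ Am.domain,
                Am ⟨Ap ⟨x', hx'⟩, hAx'⟩ = y) → x' = x := by
  classical
  subst hadj₂
  set A := Am.adjoint with hA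
  -- the closed subspace `Rp = closure (range A₋)`
  set Rng : Submodule ℂ Hp := LinearMap.range Am.toFun with hRng
  set Rp : Submodule ℂ Hp := Rng.topologicalClosure with hRpdef
  have hset : closure (Set.range fun z : Am.domain => Am z) = (Rp : Set Hp) := by
    rw [hRpdef, Submodule.topologicalClosure_coe, hRng, LinearMap.coe_range]
    rfl
  have hRpclosed : IsClosed (Rp : Set Hp) := Submodule.isClosed_topologicalClosure _
  -- the fundamental pairing
  have pair : ∀ (u : A.domain) (v : Am.domain),
      (inner ℂ (A u) (v : Hm) : ℂ) = inner ℂ (u : Hp) (Am v) :=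
    LinearPMap.adjoint_isFormalAdjoint hAmdense
  -- closedness of the graph of `A`
  have hclosed : ∀ (xs : ℕ → A.domain) (x : Hp) (w : Hm),
      Tendsto (fun n => (xs n : Hp)) atTop (nhds x) →
      Tendsto (fun n => A (xs n)) atTop (nhds w) →
      ∃ h : x ∈ A.domain, A ⟨x, h⟩ = w := by
    intro xs x w hx hw
    have key : ∀ v : Am.domain, (inner ℂ w (v : Hm) : ℂ) = inner ℂ x (Am v) := by
      intro v
      have h1 : Tendsto (fun n => (inner ℂ ((xs n : Hp)) (Am v) : ℂ)) atTop
          (nhds (inner ℂ x (Am v))) := hx.inner tendsto_const_nhds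
      have h2 : Tendsto (fun n => (inner ℂ (A (xs n)) (v : Hm) : ℂ)) atTop
          (nhds (inner ℂ w (v : Hm))) := hw.inner tendsto_const_nhds
      have h3 : (fun n => (inner ℂ (A (xs n)) (v : Hm) : ℂ))
          = fun n => (inner ℂ ((xs n : Hp)) (Am v) : ℂ) := funext fun n => pair (xs n) v
      rw [h3] at h2
      exact tendsto_nhds_unique h2 h1
    have hdom : x ∈ A.domain :=
      LinearPMap.mem_adjoint_domain_of_exists x ⟨w, fun v => key v⟩
    exact ⟨hdom, LinearPMap.adjoint_apply_eq hAmdense ⟨x, hdom⟩ (fun v => key v)⟩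
  -- elements of `Rp` orthogonal to themselves vanish
  have hker : ∀ (x : A.domain), (x : Hp) ∈ Rp → A x = 0 → (x : Hp) = 0 := by
    intro x hxR hx0
    have horth : ∀ u ∈ (closure (Set.range fun z : Am.domain => Am z)),
        (inner ℂ u ((x : Hp)) : ℂ) = 0 := by
      have hsub : (Set.range fun z : Am.domain => Am z) ⊆
          {u : Hp | (inner ℂ u ((x : Hp)) : ℂ) = 0} := by
        rintro _ ⟨v, rfl⟩
        have h1 := pair x v
        rw [hx0] at h1
        simp only [inner_zero_left] at h1
        show (inner ℂ (Am v) ((x : Hp)) : ℂ) = 0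
        rw [← inner_conj_symm, ← h1]
        simp
      have hclosed' : IsClosed {u : Hp | (inner ℂ u ((x : Hp)) : ℂ) = 0} :=
        isClosed_eq (Continuous.inner continuous_id continuous_const) continuous_const
      exact fun u hu => hclosed'.closure_subset_iff.mpr hsub hu
    have : (inner ℂ ((x : Hp)) ((x : Hp)) : ℂ) = 0 := horth _ (by rw [hset]; exact hxR)
    exact inner_self_eq_zero.mp this
  -- Poincaré inequality
  have hpoin : ∃ c : ℝ, 0 < c ∧ ∀ x : A.domain, (x : Hp) ∈ Rp →
      ‖(x : Hp)‖ ≤ c * ‖A x‖ := by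
    by_contra hcon
    push_neg at hcon
    choose xs hxsR hxs using fun n : ℕ => hcon (n + 1) (by positivity)
    have hxs_ne : ∀ n, ‖(xs n : Hp)‖ ≠ 0 := by
      intro n
      have := hxs n
      have h0 : (0:ℝ) ≤ (n+1 : ℝ) * ‖A (xs n)‖ := by positivity
      intro h
      rw [h] at this
      linarith
    set z : ℕ → A.domain := fun n => ((‖(xs n : Hp)‖ : ℂ))⁻¹ • xs n with hz
    have hz_coe : ∀ n, ((z n : Hp)) = ((‖(xs n : Hp)‖ : ℂ))⁻¹ • (xs n : Hp) := fun n => rfl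
    have hz_norm : ∀ n, ‖(z n : Hp)‖ = 1 := by
      intro n
      rw [hz_coe, norm_smul]
      simp only [norm_inv, Complex.norm_real, Real.norm_eq_abs,
        abs_of_nonneg (norm_nonneg _)]
      rw [inv_mul_cancel₀ (hxs_ne n)]
    have hzA : ∀ n, ‖A (z n)‖ < 1 / (n + 1) := by
      intro n
      have hmap : A (z n) = ((‖(xs n : Hp)‖ : ℂ))⁻¹ • A (xs n) := A.map_smul _ _
      rw [hmap, norm_smul]
      simp only [norm_inv, Complex.norm_real, Real.norm_eq_abs,
        abs_of_nonneg (norm_nonneg _)]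
      have hpos : 0 < ‖(xs n : Hp)‖ := lt_of_le_of_ne (norm_nonneg _) (Ne.symm (hxs_ne n))
      have h2 : ‖A (xs n)‖ * (n + 1) < ‖(xs n : Hp)‖ := by
        rw [mul_comm]; exact hxs n
      rw [lt_div_iff₀ (by positivity : (0:ℝ) < n+1), inv_mul_eq_div, div_mul_eq_mul_div,
        div_lt_one hpos]
      exact h2
    have hzR : ∀ n, ((z n : Hp)) ∈ Rp := fun n => Rp.smul_mem _ (hxsR n)
    obtain ⟨φ, l, hφ, hl⟩ := hpc z (fun n => by rw [hset]; exact hzR n)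
      ⟨2, fun n => by
        have := (hzA n).le
        have h1 : (1:ℝ)/(n+1) ≤ 1 := by
          rw [div_le_one (by positivity)]; linarith
        rw [hz_norm]; linarith⟩
    have hlA : Tendsto (fun n => A (z (φ n))) atTop (nhds 0) := by
      have hb : ∀ n, ‖A (z (φ n))‖ ≤ 1 / (n + 1 : ℝ) := by
        intro n
        have h1 := (hzA (φ n)).le
        have h2 : (1:ℝ)/(φ n + 1) ≤ 1/(n+1) := by
          apply one_div_le_one_div_of_le (by positivity)
          have h3 : n ≤ φ n := hφ.le_apply
          have h4 : (n:ℝ) ≤ (φ n : ℝ) := by exact_mod_cast h3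
          linarith
        linarith
      exact squeeze_zero_norm hb tendsto_one_div_add_atTop_nhds_zero_nat
    obtain ⟨hld, hl0⟩ := hclosed (fun n => z (φ n)) l 0 hl hlA
    have hlR : l ∈ Rp := hRpclosed.mem_of_tendsto hl
      (Filter.Eventually.of_forall fun n => hzR (φ n))
    have hlz : l = 0 := hker ⟨l, hld⟩ hlR hl0
    have hln : ‖l‖ = 1 := by
      have h1 : Tendsto (fun n => ‖(z (φ n) : Hp)‖) atTop (nhds ‖l‖) := hl.norm
      have h2 : (fun n => ‖(z (φ n) : Hp)‖) = fun _ => (1:ℝ) :=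
        funext fun n => hz_norm (φ n)
      rw [h2] at h1
      exact tendsto_nhds_unique h1 tendsto_const_nhds
    rw [hlz, norm_zero] at hln
    exact zero_ne_one hln
  obtain ⟨c, hc, hcin⟩ := hpoin
  -- uniqueness of preimages
  have huniq : ∀ (x x' : A.domain), (x : Hp) ∈ Rp → (x' : Hp) ∈ Rp →
      A x = A x' → (x : Hp) = (x' : Hp) := by
    intro x x' hx hx' he
    have h1 := hcin (x - x') (Rp.sub_mem hx hx')
    rw [A.map_sub, he, sub_self, norm_zero, mul_zero] at h1
    have h2 : ((x - x' : A.domain) : Hp) = (x : Hp) - (x' : Hp) := rfl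
    rw [h2] at h1
    have := norm_le_zero_iff.mp h1
    exact sub_eq_zero.mp this
  -- the range subspace `W`
  set Wsub : Submodule ℂ Hm := Submodule.map A.toFun (Rp.comap A.domain.subtype) with hWdef
  have hWmem : ∀ w : Hm, w ∈ Wsub ↔ ∃ x : A.domain, (x : Hp) ∈ Rp ∧ A x = w := by
    intro w
    simp only [hWdef, Submodule.mem_map, Submodule.mem_comap, Submodule.coe_subtype]
    rfl
  have hWclosed : IsClosed (Wsub : Set Hm) := by
    apply IsSeqClosed.isClosed
    intro ws w hws hw
    choose xs hxsR hxsA using fun n => (hWmem (ws n)).mp (hws n)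
    have hxs_cauchy : CauchySeq (fun n => (xs n : Hp)) := by
      rw [Metric.cauchySeq_iff]
      intro ε hε
      obtain ⟨N, hN⟩ := Metric.cauchySeq_iff.mp hw.cauchySeq (ε / c) (by positivity)
      refine ⟨N, fun m hm n hn => ?_⟩
      have hkey : ‖(xs m : Hp) - (xs n : Hp)‖ ≤ c * ‖ws m - ws n‖ := by
        have h1 := hcin (xs m - xs n) (Rp.sub_mem (hxsR m) (hxsR n))
        rw [A.map_sub, hxsA m, hxsA n] at h1
        exact h1
      have h2 := hN m hm n hn
      rw [dist_eq_norm] at h2 ⊢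
      calc ‖(xs m : Hp) - (xs n : Hp)‖ ≤ c * ‖ws m - ws n‖ := hkey
        _ < c * (ε / c) := by exact mul_lt_mul_of_pos_left h2 hc
        _ = ε := by field_simp
    obtain ⟨x, hx⟩ := cauchySeq_tendsto_of_complete hxs_cauchy
    have hwA : Tendsto (fun n => A (xs n)) atTop (nhds w) := by
      have : (fun n => A (xs n)) = ws := funext fun n => hxsA n
      rw [this]; exact hw
    obtain ⟨hdom, hval⟩ := hclosed xs x w hx hwA
    have hxR : x ∈ Rp := hRpclosed.mem_of_tendsto hx
      (Filter.Eventually.of_forall fun n => hxsR n)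
    exact (hWmem w).mpr ⟨⟨x, hdom⟩, hxR, hval⟩
  haveI : CompleteSpace Wsub := hWclosed.completeSpace_coe
  -- the bounded inverse `K : W → Hp`
  choose f hfR hfA using fun w : Wsub => (hWmem w).mp w.2
  have hKadd : ∀ w w' : Wsub, ((f (w + w') : Hp)) = (f w : Hp) + (f w' : Hp) := by
    intro w w'
    have h1 : ((f w + f w' : A.domain) : Hp) ∈ Rp := Rp.add_mem (hfR w) (hfR w')
    have h2 : A (f (w + w')) = A (f w + f w') := by
      rw [A.map_add, hfA, hfA, hfA]; rfl
    exact huniq _ _ (hfR _) h1 h2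
  have hKsmul : ∀ (a : ℂ) (w : Wsub), ((f (a • w) : Hp)) = a • (f w : Hp) := by
    intro a w
    have h1 : ((a • f w : A.domain) : Hp) ∈ Rp := Rp.smul_mem _ (hfR w)
    have h2 : A (f (a • w)) = A (a • f w) := by
      rw [A.map_smul, hfA, hfA]; rfl
    exact huniq _ _ (hfR _) h1 h2
  have hKbound : ∀ w : Wsub, ‖(f w : Hp)‖ ≤ c * ‖w‖ := by
    intro w
    have h1 := hcin (f w) (hfR w)
    rw [hfA w] at h1
    exact h1
  set Klin : Wsub →ₗ[ℂ] Hp :=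
    { toFun := fun w => (f w : Hp)
      map_add' := hKadd
      map_smul' := hKsmul } with hKlin
  set Kc : Wsub →L[ℂ] Hp := Klin.mkContinuous c hKbound with hKc
  have hKc_apply : ∀ w : Wsub, Kc w = (f w : Hp) := fun w => rfl
  -- elements of `Rpᗮ` are in the kernel
  have hperp : ∀ z : Hp, z ∈ Rpᗮ → ∃ hz : z ∈ A.domain, A ⟨z, hz⟩ = 0 := by
    intro z hz
    have key : ∀ u : Am.domain, (inner ℂ z (Am u) : ℂ) = 0 := by
      intro u
      have hmem : Am u ∈ Rp := Rng.le_topologicalClosure (LinearMap.mem_range_self _ u)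
      have h0 := (Submodule.mem_orthogonal _ _).mp hz (Am u) hmem
      rw [← inner_conj_symm, h0]
      simp
    have hdom : z ∈ A.domain :=
      LinearPMap.mem_adjoint_domain_of_exists z ⟨0, fun u => by
        rw [inner_zero_left, key u]⟩
    refine ⟨hdom, LinearPMap.adjoint_apply_eq hAmdense ⟨z, hdom⟩ (fun u => ?_)⟩
    rw [inner_zero_left, key u]
  -- now fix `y`
  refine ⟨c^2 + c + 1, by positivity, ?_⟩
  intro y hy
  rw [hset] at hy
  set w₀ : Wsub := ContinuousLinearMap.adjoint Kc y with hw₀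
  -- the key identity
  have hstar : ∀ v : A.domain, (inner ℂ ((w₀ : Hm)) (A v) : ℂ) = inner ℂ y (v : Hp) := by
    intro v
    set v₂ : Hp := (v : Hp) - (Submodule.orthogonalProjection Rp (v : Hp) : Hp) with hv₂def
    have hv₂ : v₂ ∈ Rpᗮ := Submodule.sub_starProjection_mem_orthogonal (K := Rp) _
    obtain ⟨hv₂dom, hv₂val⟩ := hperp v₂ hv₂
    set v₁ : A.domain := v - ⟨v₂, hv₂dom⟩ with hv₁def
    have hv₁coe : (v₁ : Hp) = (Submodule.orthogonalProjection Rp (v : Hp) : Hp) := by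
      show (v : Hp) - v₂ = _
      rw [hv₂def]; abel
    have hv₁R : (v₁ : Hp) ∈ Rp := by rw [hv₁coe]; exact Submodule.coe_mem _
    have hv₁A : A v₁ = A v := by
      rw [hv₁def, A.map_sub, hv₂val, sub_zero]
    have hwmem : A v ∈ Wsub := (hWmem _).mpr ⟨v₁, hv₁R, hv₁A⟩
    set w' : Wsub := ⟨A v, hwmem⟩ with hw'
    have hKw' : Kc w' = (v₁ : Hp) :=
      huniq (f w') v₁ (hfR w') hv₁R (by rw [hfA w', hv₁A])
    have step1 : (inner ℂ ((w₀ : Hm)) (A v) : ℂ) = inner ℂ w₀ w' := by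
      rw [Submodule.coe_inner]
    have step2 : (inner ℂ w₀ w' : ℂ) = inner ℂ y (Kc w') :=
      ContinuousLinearMap.adjoint_inner_left Kc w' y
    have step3 : (inner ℂ y ((v₁ : Hp)) : ℂ) = inner ℂ y (v : Hp) := by
      have : (v₁ : Hp) = (v : Hp) - v₂ := rfl
      rw [this, inner_sub_right]
      have h0 : (inner ℂ y v₂ : ℂ) = 0 := (Submodule.mem_orthogonal _ _).mp hv₂ y hy
      rw [h0, sub_zero]
    rw [step1, step2, hKw', step3]
  -- domain membership and value for `Am`
  have hxdom0 : (w₀ : Hm) ∈ A.adjoint.domain :=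
    LinearPMap.mem_adjoint_domain_of_exists _ ⟨y, fun v => (hstar v).symm⟩
  have hval0 : A.adjoint ⟨(w₀ : Hm), hxdom0⟩ = y :=
    LinearPMap.adjoint_apply_eq hApdense _ (fun v => (hstar v).symm)
  have hxdomAm : (w₀ : Hm) ∈ Am.domain := hadj₁ ▸ hxdom0
  have hvalAm : Am ⟨(w₀ : Hm), hxdomAm⟩ = y := by
    rw [← pmap_congr hadj₁ _ hxdom0 hxdomAm]; exact hval0
  -- the solution
  set x : Hp := (f w₀ : Hp) with hxdef
  have hxdom : x ∈ A.domain := (f w₀).2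
  have hxval : A ⟨x, hxdom⟩ = (w₀ : Hm) := by
    have : (⟨x, hxdom⟩ : A.domain) = f w₀ := rfl
    rw [this]; exact hfA w₀
  have hxR : x ∈ Rp := hfR w₀
  -- the norm estimate
  have hw₀norm : ‖(w₀ : Hm)‖ ≤ c * ‖y‖ := by
    have h1 : (inner ℂ ((w₀ : Hm)) ((w₀ : Hm)) : ℂ) = inner ℂ y x := by
      have := hstar (f w₀)
      rw [hfA w₀] at this
      exact this
    have h2 : ‖(w₀ : Hm)‖^2 = RCLike.re (K := ℂ) (inner ℂ ((w₀ : Hm)) ((w₀ : Hm))) :=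
      (inner_self_eq_norm_sq _).symm
    have h3 : RCLike.re (K := ℂ) (inner ℂ y x) ≤ ‖(inner ℂ y x : ℂ)‖ := RCLike.re_le_norm _
    have h4 : ‖(inner ℂ y x : ℂ)‖ ≤ ‖y‖ * ‖x‖ := norm_inner_le_norm _ _
    have h5 : ‖x‖ ≤ c * ‖(w₀ : Hm)‖ := by
      have := hKbound w₀
      have hnw : ‖w₀‖ = ‖(w₀ : Hm)‖ := rfl
      rw [hnw] at this
      exact this
    by_cases hzero : ‖(w₀ : Hm)‖ = 0
    · rw [hzero]; positivity
    · have hpos : 0 < ‖(w₀ : Hm)‖ := lt_of_le_of_ne (norm_nonneg _) (Ne.symm hzero)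
      have : ‖(w₀ : Hm)‖^2 ≤ ‖y‖ * (c * ‖(w₀ : Hm)‖) := by
        rw [h2, h1]
        calc RCLike.re (K := ℂ) (inner ℂ y x) ≤ ‖(inner ℂ y x : ℂ)‖ := h3
          _ ≤ ‖y‖ * ‖x‖ := h4
          _ ≤ ‖y‖ * (c * ‖(w₀ : Hm)‖) := by
              apply mul_le_mul_of_nonneg_left h5 (norm_nonneg _)
      nlinarith [norm_nonneg y]
  have hxnorm : ‖x‖ ≤ c * (c * ‖y‖) := by
    have h5 : ‖x‖ ≤ c * ‖(w₀ : Hm)‖ := by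
      have := hKbound w₀
      exact this
    calc ‖x‖ ≤ c * ‖(w₀ : Hm)‖ := h5
      _ ≤ c * (c * ‖y‖) := by exact mul_le_mul_of_nonneg_left hw₀norm hc.le
  have hAxmem : A ⟨x, hxdom⟩ ∈ Am.domain := by rw [hxval]; exact hxdomAm
  refine ⟨x, ⟨by rw [hset]; exact hxR, hxdom, ?_⟩, ?_⟩
  · refine ⟨hAxmem, ?_, ?_⟩
    · have heq : (⟨A ⟨x, hxdom⟩, hAxmem⟩ : Am.domain) = ⟨(w₀ : Hm), hxdomAm⟩ :=
        Subtype.ext hxval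
      rw [heq]; exact hvalAm
    · rw [hxval]
      have := norm_nonneg y
      nlinarith [hw₀norm, hxnorm]
  · -- uniqueness
    rintro x' ⟨hx'R, hx'dom, hAx', hval'⟩
    rw [hset] at hx'R
    set d : A.domain := ⟨x', hx'dom⟩ - ⟨x, hxdom⟩ with hd
    have hdval : A d = A ⟨x', hx'dom⟩ - (w₀ : Hm) := by
      rw [hd, A.map_sub, hxval]
    have hwd : A ⟨x', hx'dom⟩ - (w₀ : Hm) ∈ Am.domain := Am.domain.sub_mem hAx' hxdomAm
    have hAmval : Am ⟨A ⟨x', hx'dom⟩ - (w₀ : Hm), hwd⟩ = 0 := by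
      have heq : (⟨A ⟨x', hx'dom⟩ - (w₀ : Hm), hwd⟩ : Am.domain)
          = ⟨A ⟨x', hx'dom⟩, hAx'⟩ - ⟨(w₀ : Hm), hxdomAm⟩ := rfl
      rw [heq, Am.map_sub, hval', hvalAm, sub_self]
    have hinner : (inner ℂ (A d) (A d) : ℂ) = 0 := by
      have h1 := pair d ⟨A ⟨x', hx'dom⟩ - (w₀ : Hm), hwd⟩
      rw [hAmval, inner_zero_right] at h1
      have h2 : ((⟨A ⟨x', hx'dom⟩ - (w₀ : Hm), hwd⟩ : Am.domain) : Hm) = A d := hdval.symm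
      rw [h2] at h1
      exact h1
    have hAd : A d = 0 := inner_self_eq_zero.mp hinner
    have hAeq : A ⟨x', hx'dom⟩ = A ⟨x, hxdom⟩ := by
      have := A.map_sub ⟨x', hx'dom⟩ ⟨x, hxdom⟩
      rw [← hd, hAd] at this
      exact (sub_eq_zero.mp this.symm)
    exact huniq ⟨x', hx'dom⟩ ⟨x, hxdom⟩ hx'R hxR hAeq
end

section
/- Let (A₊, A₋) be a dual pair in (H₊, H₋) having the partial compactness property, and let L : closure(range A₋) → closure(range A₋) be the solution operator that assigns to y ∈ closure(range A₋) the unique x ∈ D(A₊) ∩ closure(range A₋) with A₊x ∈ D(A₋) and A₋(A₊x) = y. Then L is a bounded linear operator on the Hilbert space closure(range A₋) which is compact, injective, selfadjoint, and nonnegative; more precisely, for every y ∈ closure(range A₋) one has ⟨y, Ly⟩ = ‖A₊(Ly)‖²_{H₋} ≥ 0. -/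
open Filter Topology


/-- Let `(A₊, A₋)` be a dual pair in `(H₊, H₋)` with the partial
compactness property, and let `L` be the solution operator assigning to
`y ∈ K := closure (range A₋)` the unique `x ∈ D(A₊) ∩ K` with `A₊ x ∈ D(A₋)` and
`A₋ (A₊ x) = y`.  Then (on `K`) `L` is linear, bounded, compact, injective, selfadjoint
and nonnegative; more precisely `⟨y, L y⟩ = ‖A₊ (L y)‖² ≥ 0` for every `y ∈ K`. -/
theorem stmt_6
    {Hp Hm : Type*}
    [NormedAddCommGroup Hp] [InnerProductSpace ℂ Hp] [CompleteSpace Hp]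
    [NormedAddCommGroup Hm] [InnerProductSpace ℂ Hm] [CompleteSpace Hm]
    (Ap : Hp →ₗ.[ℂ] Hm) (Am : Hm →ₗ.[ℂ] Hp)
    (hApdense : Dense (Ap.domain : Set Hp)) (hAmdense : Dense (Am.domain : Set Hm))
    (hadj₁ : Ap.adjoint = Am) (hadj₂ : Am.adjoint = Ap)
    -- partial compactness property
    (hpc : ∀ x : ℕ → Ap.domain,
      (∀ n, (x n : Hp) ∈ closure (Set.range fun y : Am.domain => Am y)) →
      (∃ C : ℝ, ∀ n, ‖(x n : Hp)‖ + ‖Ap (x n)‖ ≤ C) →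
      ∃ (φ : ℕ → ℕ) (l : Hp), StrictMono φ ∧
        Filter.Tendsto (fun n => (x (φ n) : Hp)) Filter.atTop (nhds l))
    -- the solution operator `L`
    (L : Hp → Hp)
    (hL : ∀ y ∈ closure (Set.range fun z : Am.domain => Am z),
      L y ∈ closure (Set.range fun z : Am.domain => Am z) ∧
      ∃ h₁ : L y ∈ Ap.domain, ∃ h₂ : Ap ⟨L y, h₁⟩ ∈ Am.domain,
        Am ⟨Ap ⟨L y, h₁⟩, h₂⟩ = y) :
    -- `L` is linear on `K`
    (∀ y ∈ closure (Set.range fun z : Am.domain => Am z),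
      ∀ z ∈ closure (Set.range fun z : Am.domain => Am z),
        L (y + z) = L y + L z) ∧
    (∀ c : ℂ, ∀ y ∈ closure (Set.range fun z : Am.domain => Am z),
        L (c • y) = c • L y) ∧
    -- `L` is bounded
    (∃ C : ℝ, 0 ≤ C ∧ ∀ y ∈ closure (Set.range fun z : Am.domain => Am z),
        ‖L y‖ ≤ C * ‖y‖) ∧
    -- `L` is compact
    (∀ y : ℕ → Hp,
      (∀ n, y n ∈ closure (Set.range fun z : Am.domain => Am z)) →
      (∃ C : ℝ, ∀ n, ‖y n‖ ≤ C) →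
      ∃ (φ : ℕ → ℕ) (l : Hp), StrictMono φ ∧
        Filter.Tendsto (fun n => L (y (φ n))) Filter.atTop (nhds l)) ∧
    -- `L` is injective
    (∀ y ∈ closure (Set.range fun z : Am.domain => Am z), L y = 0 → y = 0) ∧
    -- `L` is selfadjoint
    (∀ y ∈ closure (Set.range fun z : Am.domain => Am z),
      ∀ z ∈ closure (Set.range fun z : Am.domain => Am z),
        (inner ℂ (L y) z : ℂ) = (inner ℂ y (L z) : ℂ)) ∧
    -- `L` is nonnegative:  `⟨y, L y⟩ = ‖A₊ (L y)‖² ≥ 0`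
    (∀ y ∈ closure (Set.range fun z : Am.domain => Am z),
      ∀ h₁ : L y ∈ Ap.domain,
        (inner ℂ y (L y) : ℂ) = ((‖Ap ⟨L y, h₁⟩‖ : ℝ) : ℂ) ^ 2 ∧
        0 ≤ ((inner ℂ y (L y) : ℂ)).re) := by
  -- the closed subspace `K = closure (range A₋)` as a submodule
  set S : Submodule ℂ Hp := (LinearMap.range Am.toFun).topologicalClosure with hSdef
  have hKS : closure (Set.range fun z : Am.domain => Am z) = (S : Set Hp) := by
    rw [hSdef, Submodule.topologicalClosure_coe]
    congr 1
  simp only [hKS] at hL hpc ⊢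
  -- the fundamental adjoint identity
  have hform : ∀ (w : Am.domain) (x : Ap.domain),
      (inner ℂ (Am w) (x : Hp) : ℂ) = inner ℂ (w : Hm) (Ap x) :=
    hadj₁ ▸ Ap.adjoint_isFormalAdjoint hApdense
  have hrange : ∀ w : Am.domain, Am w ∈ S := fun w =>
    (LinearMap.range Am.toFun).le_topologicalClosure (LinearMap.mem_range_self _ w)
  -- orthogonality lemma
  have horth : ∀ v : Hp, v ∈ S → (∀ w : Am.domain, (inner ℂ (Am w) v : ℂ) = 0) → v = 0 := by
    intro v hv h
    have hcl : IsClosed {u : Hp | (inner ℂ u v : ℂ) = 0} :=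
      isClosed_eq (continuous_id.inner continuous_const) continuous_const
    have hsub : closure (LinearMap.range Am.toFun : Set Hp) ⊆ {u : Hp | (inner ℂ u v : ℂ) = 0} := by
      apply closure_minimal _ hcl
      rintro _ ⟨w, rfl⟩
      exact h w
    have hvv : (inner ℂ v v : ℂ) = 0 := hsub hv
    exact inner_self_eq_zero.mp hvv
  -- extract solution data
  choose hLK hdom hdom2 heq using hL
  set xx : ∀ y : Hp, y ∈ (S : Set Hp) → Ap.domain := fun y hy => ⟨L y, hdom y hy⟩ with hxxdef
  set ww : ∀ y : Hp, y ∈ (S : Set Hp) → Am.domain :=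
    fun y hy => ⟨Ap (xx y hy), hdom2 y hy⟩ with hwwdef
  have hAmww : ∀ y (hy : y ∈ (S : Set Hp)), Am (ww y hy) = y := heq
  -- uniqueness: a solution with datum 0 is 0
  have huniq0 : ∀ (x : Ap.domain), (x : Hp) ∈ S → ∀ h₂ : Ap x ∈ Am.domain,
      Am ⟨Ap x, h₂⟩ = 0 → (x : Hp) = 0 := by
    intro x hx h₂ he
    have h5 : (inner ℂ (Ap x) (Ap x) : ℂ) = 0 := by
      have := hform ⟨Ap x, h₂⟩ x
      rw [he] at this
      rw [← this, inner_zero_left]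
    have hAp0 : Ap x = 0 := inner_self_eq_zero.mp h5
    refine horth _ hx fun w => ?_
    rw [hform w x, hAp0, inner_zero_right]
  -- general uniqueness
  have huniq2 : ∀ (x₁ x₂ : Ap.domain), (x₁ : Hp) ∈ S → (x₂ : Hp) ∈ S →
      ∀ (h₁ : Ap x₁ ∈ Am.domain) (h₂ : Ap x₂ ∈ Am.domain),
      Am ⟨Ap x₁, h₁⟩ = Am ⟨Ap x₂, h₂⟩ → (x₁ : Hp) = (x₂ : Hp) := by
    intro x₁ x₂ hk1 hk2 h₁ h₂ he
    have hd : ((x₁ - x₂ : Ap.domain) : Hp) ∈ S := by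
      simpa using S.sub_mem hk1 hk2
    have hmap : Ap (x₁ - x₂) = Ap x₁ - Ap x₂ := Ap.map_sub x₁ x₂
    have hdd : Ap (x₁ - x₂) ∈ Am.domain := by
      rw [hmap]; exact Am.domain.sub_mem h₁ h₂
    have he0 : Am ⟨Ap (x₁ - x₂), hdd⟩ = 0 := by
      have hx : (⟨Ap (x₁ - x₂), hdd⟩ : Am.domain) =
          (⟨Ap x₁, h₁⟩ : Am.domain) - ⟨Ap x₂, h₂⟩ := Subtype.ext hmap
      rw [hx, Am.map_sub, he, sub_self]
    have := huniq0 (x₁ - x₂) hd hdd he0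
    have : (x₁ : Hp) - (x₂ : Hp) = 0 := by simpa using this
    exact sub_eq_zero.mp this
  have hScl : IsClosed (S : Set Hp) := by
    rw [hSdef]; exact Submodule.isClosed_topologicalClosure _
  -- inner product formula
  have hinner : ∀ y (hy : y ∈ (S : Set Hp)),
      (inner ℂ y (L y) : ℂ) = ((‖Ap (xx y hy)‖ : ℝ) : ℂ) ^ 2 := by
    intro y hy
    calc (inner ℂ y (L y) : ℂ) = inner ℂ (Am (ww y hy)) ((xx y hy : Hp)) := by
          rw [hAmww y hy]
      _ = inner ℂ ((ww y hy : Hm)) (Ap (xx y hy)) := hform _ _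
      _ = ((‖Ap (xx y hy)‖ : ℝ) : ℂ) ^ 2 := inner_self_eq_norm_sq_to_K _
  have hAp_sq : ∀ y (hy : y ∈ (S : Set Hp)), ‖Ap (xx y hy)‖ ^ 2 ≤ ‖y‖ * ‖L y‖ := by
    intro y hy
    have h2 : ((inner ℂ y (L y) : ℂ)).re = ‖Ap (xx y hy)‖ ^ 2 := by
      rw [hinner y hy, ← Complex.ofReal_pow]; exact Complex.ofReal_re _
    calc ‖Ap (xx y hy)‖ ^ 2 = (inner ℂ y (L y) : ℂ).re := h2.symm
      _ ≤ ‖(inner ℂ y (L y) : ℂ)‖ := by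
          exact Complex.re_le_norm _
      _ ≤ ‖y‖ * ‖L y‖ := norm_inner_le_norm _ _
  -- additivity
  have hadd : ∀ y ∈ (S : Set Hp), ∀ z ∈ (S : Set Hp), L (y + z) = L y + L z := by
    intro y hy z hz
    have hyz : y + z ∈ (S : Set Hp) := S.add_mem hy hz
    have hd : L y + L z ∈ Ap.domain := Ap.domain.add_mem (hdom y hy) (hdom z hz)
    have hxsum : (⟨L y + L z, hd⟩ : Ap.domain) = xx y hy + xx z hz := Subtype.ext rfl
    have hApsum : Ap ⟨L y + L z, hd⟩ = Ap (xx y hy) + Ap (xx z hz) := by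
      rw [hxsum, Ap.map_add]
    have hAmdom : Ap ⟨L y + L z, hd⟩ ∈ Am.domain := by
      rw [hApsum]; exact Am.domain.add_mem (hdom2 y hy) (hdom2 z hz)
    have hsol : Am ⟨Ap ⟨L y + L z, hd⟩, hAmdom⟩ = y + z := by
      have hx : (⟨Ap ⟨L y + L z, hd⟩, hAmdom⟩ : Am.domain) = ww y hy + ww z hz :=
        Subtype.ext hApsum
      rw [hx, Am.map_add, hAmww y hy, hAmww z hz]
    have := huniq2 (xx (y + z) hyz) ⟨L y + L z, hd⟩ (hLK (y + z) hyz)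
      (S.add_mem (hLK y hy) (hLK z hz)) (hdom2 (y + z) hyz) hAmdom
      ((hAmww (y + z) hyz).trans hsol.symm)
    exact this
  -- homogeneity
  have hsmul : ∀ (c : ℂ), ∀ y ∈ (S : Set Hp), L (c • y) = c • L y := by
    intro c y hy
    have hcy : c • y ∈ (S : Set Hp) := S.smul_mem c hy
    have hd : c • L y ∈ Ap.domain := Ap.domain.smul_mem c (hdom y hy)
    have hxs : (⟨c • L y, hd⟩ : Ap.domain) = c • xx y hy := Subtype.ext rfl
    have hAps : Ap ⟨c • L y, hd⟩ = c • Ap (xx y hy) := by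
      rw [hxs, Ap.map_smul]
    have hAmdom : Ap ⟨c • L y, hd⟩ ∈ Am.domain := by
      rw [hAps]; exact Am.domain.smul_mem c (hdom2 y hy)
    have hsol : Am ⟨Ap ⟨c • L y, hd⟩, hAmdom⟩ = c • y := by
      have hx : (⟨Ap ⟨c • L y, hd⟩, hAmdom⟩ : Am.domain) = c • ww y hy :=
        Subtype.ext hAps
      rw [hx, Am.map_smul, hAmww y hy]
    exact huniq2 (xx (c • y) hcy) ⟨c • L y, hd⟩ (hLK (c • y) hcy)
      (S.smul_mem c (hLK y hy)) (hdom2 (c • y) hcy) hAmdom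
      ((hAmww (c • y) hcy).trans hsol.symm)
  -- boundedness
  have hbdd : ∃ C : ℝ, 0 ≤ C ∧ ∀ y ∈ (S : Set Hp), ‖L y‖ ≤ C * ‖y‖ := by
    by_contra hnb
    push_neg at hnb
    have hsel : ∀ n : ℕ, ∃ y, y ∈ (S : Set Hp) ∧ ((n : ℝ) + 1) * ‖y‖ < ‖L y‖ := by
      intro n
      obtain ⟨y, hy, h⟩ := hnb ((n : ℝ) + 1) (by positivity)
      exact ⟨y, hy, h⟩
    choose y hyK hylt using hsel
    have hLypos : ∀ n, 0 < ‖L (y n)‖ := fun n =>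
      lt_of_le_of_lt (by positivity) (hylt n)
    set z : ℕ → Hp := fun n => ((‖L (y n)‖⁻¹ : ℝ) : ℂ) • y n with hzdef
    have hzK : ∀ n, z n ∈ (S : Set Hp) := fun n => S.smul_mem _ (hyK n)
    have hLz : ∀ n, L (z n) = ((‖L (y n)‖⁻¹ : ℝ) : ℂ) • L (y n) := fun n =>
      hsmul _ (y n) (hyK n)
    have hLznorm : ∀ n, ‖L (z n)‖ = 1 := by
      intro n
      rw [hLz n, norm_smul]
      simp [abs_of_nonneg (inv_nonneg.mpr (norm_nonneg _)),
        inv_mul_cancel₀ (ne_of_gt (hLypos n))]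
    have hznorm : ∀ n, ‖z n‖ ≤ 1 / ((n : ℝ) + 1) := by
      intro n
      have h1 : ‖z n‖ = ‖y n‖ / ‖L (y n)‖ := by
        rw [hzdef]
        simp [norm_smul, abs_of_nonneg (inv_nonneg.mpr (norm_nonneg _)),
          div_eq_mul_inv, mul_comm]
      rw [h1, div_le_div_iff₀ (hLypos n) (by positivity)]
      nlinarith [hylt n, norm_nonneg (y n)]
    set x : ℕ → Ap.domain := fun n => xx (z n) (hzK n) with hxdef
    have hx1 : ∀ n, ‖(x n : Hp)‖ = 1 := fun n => hLznorm n
    have hAps : ∀ n, ‖Ap (x n)‖ ^ 2 ≤ ‖z n‖ := by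
      intro n
      have := hAp_sq (z n) (hzK n)
      calc ‖Ap (x n)‖ ^ 2 ≤ ‖z n‖ * ‖L (z n)‖ := this
        _ = ‖z n‖ := by rw [hLznorm n, mul_one]
    obtain ⟨φ, l, hφ, hl⟩ := hpc x (fun n => hLK (z n) (hzK n)) ⟨2, by
      intro n
      have h3 : 1 / ((n : ℝ) + 1) ≤ 1 := by
        rw [div_le_one (by positivity)]
        linarith [(Nat.cast_nonneg n : (0:ℝ) ≤ (n : ℝ))]
      have h2 : ‖Ap (x n)‖ ≤ 1 := by
        nlinarith [hAps n, hznorm n, h3, norm_nonneg (Ap (x n))]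
      rw [hx1 n]; linarith⟩
    have hlK : l ∈ (S : Set Hp) :=
      hScl.mem_of_tendsto hl
        (Filter.Eventually.of_forall fun n => hLK (z (φ n)) (hzK (φ n)))
    have hlnorm : ‖l‖ = 1 := by
      have h1 := hl.norm
      simp only [hx1] at h1
      exact tendsto_nhds_unique h1 tendsto_const_nhds
    have hAptend : Filter.Tendsto (fun n => ‖Ap (x (φ n))‖) Filter.atTop (nhds 0) := by
      have hb : ∀ n : ℕ, ‖Ap (x (φ n))‖ ≤ Real.sqrt (1 / ((n : ℝ) + 1)) := by
        intro n
        rw [Real.le_sqrt (norm_nonneg _) (by positivity)]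
        calc ‖Ap (x (φ n))‖ ^ 2 ≤ ‖z (φ n)‖ := hAps (φ n)
          _ ≤ 1 / ((φ n : ℝ) + 1) := hznorm (φ n)
          _ ≤ 1 / ((n : ℝ) + 1) := by
              apply one_div_le_one_div_of_le (by positivity)
              have hφn : (n : ℝ) ≤ (φ n : ℝ) := by exact_mod_cast hφ.le_apply
              linarith
      have h0 : Filter.Tendsto (fun n : ℕ => 1 / ((n : ℝ) + 1)) Filter.atTop (nhds 0) :=
        tendsto_one_div_add_atTop_nhds_zero_nat
      have hsq0 := (Real.continuous_sqrt.tendsto 0).comp h0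
      simp only [Function.comp_def, Real.sqrt_zero] at hsq0
      exact squeeze_zero (fun n => norm_nonneg _) hb hsq0
    have hl0 : l = 0 := by
      apply horth l hlK
      intro w
      have t1 : Filter.Tendsto (fun n => (inner ℂ (Am w) ((x (φ n)) : Hp) : ℂ))
          Filter.atTop (nhds (inner ℂ (Am w) l)) :=
        Filter.Tendsto.inner tendsto_const_nhds hl
      have t2 : Filter.Tendsto (fun n => (inner ℂ (Am w) ((x (φ n)) : Hp) : ℂ))
          Filter.atTop (nhds 0) := by
        have hb : ∀ n : ℕ, ‖(inner ℂ (Am w) ((x (φ n)) : Hp) : ℂ)‖ ≤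
            ‖(w : Hm)‖ * ‖Ap (x (φ n))‖ := by
          intro n
          rw [hform w (x (φ n))]
          exact norm_inner_le_norm _ _
        exact squeeze_zero_norm hb (by simpa using hAptend.const_mul ‖(w : Hm)‖)
      exact tendsto_nhds_unique t1 t2
    rw [hl0] at hlnorm
    simp at hlnorm
  -- compactness
  have hcpt : ∀ y : ℕ → Hp, (∀ n, y n ∈ (S : Set Hp)) → (∃ C : ℝ, ∀ n, ‖y n‖ ≤ C) →
      ∃ (φ : ℕ → ℕ) (l : Hp), StrictMono φ ∧
        Filter.Tendsto (fun n => L (y (φ n))) Filter.atTop (nhds l) := by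
    intro y hyK ⟨C0, hC0⟩
    obtain ⟨C, hCnn, hC⟩ := hbdd
    have hC0nn : 0 ≤ C0 := le_trans (norm_nonneg _) (hC0 0)
    set x : ℕ → Ap.domain := fun n => xx (y n) (hyK n) with hxdef
    have hb : ∀ n, ‖(x n : Hp)‖ + ‖Ap (x n)‖ ≤ C * C0 + Real.sqrt (C0 * (C * C0)) := by
      intro n
      have h1 : ‖(x n : Hp)‖ ≤ C * C0 := by
        calc ‖L (y n)‖ ≤ C * ‖y n‖ := hC (y n) (hyK n)
          _ ≤ C * C0 := by nlinarith [hC0 n]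
      have h2 : ‖Ap (x n)‖ ≤ Real.sqrt (C0 * (C * C0)) := by
        rw [Real.le_sqrt (norm_nonneg _) (mul_nonneg hC0nn (mul_nonneg hCnn hC0nn))]
        calc ‖Ap (x n)‖ ^ 2 ≤ ‖y n‖ * ‖L (y n)‖ := hAp_sq (y n) (hyK n)
          _ ≤ C0 * (C * C0) := by
              have := hC (y n) (hyK n)
              nlinarith [hC0 n, norm_nonneg (y n), norm_nonneg (L (y n))]
      linarith
    obtain ⟨φ, l, hφ, hl⟩ := hpc x (fun n => hLK (y n) (hyK n)) ⟨_, hb⟩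
    exact ⟨φ, l, hφ, hl⟩
  -- injectivity
  have hinj : ∀ y ∈ (S : Set Hp), L y = 0 → y = 0 := by
    intro y hy h0
    have hx0 : xx y hy = 0 := Subtype.ext h0
    have h1 : Ap (xx y hy) = 0 := by rw [hx0]; exact Ap.map_zero
    have hw0 : ww y hy = 0 := Subtype.ext h1
    rw [← hAmww y hy, hw0]
    exact Am.map_zero
  -- selfadjointness
  have hsa : ∀ y ∈ (S : Set Hp), ∀ z ∈ (S : Set Hp),
      (inner ℂ (L y) z : ℂ) = (inner ℂ y (L z) : ℂ) := by
    intro y hy z hz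
    have h1 : (inner ℂ y (L z) : ℂ) = inner ℂ (Ap (xx y hy)) (Ap (xx z hz)) := by
      calc (inner ℂ y (L z) : ℂ) = inner ℂ (Am (ww y hy)) ((xx z hz : Hp)) := by
            rw [hAmww y hy]
        _ = inner ℂ ((ww y hy : Hm)) (Ap (xx z hz)) := hform _ _
    have h2 : (inner ℂ (L y) z : ℂ) = inner ℂ (Ap (xx y hy)) (Ap (xx z hz)) := by
      calc (inner ℂ (L y) z : ℂ) = inner ℂ ((xx y hy : Hp)) (Am (ww z hz)) := by
            rw [hAmww z hz]
        _ = inner ℂ (Ap (xx y hy)) ((ww z hz : Hm)) := by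
            rw [← inner_conj_symm, hform (ww z hz) (xx y hy), inner_conj_symm]
    exact h2.trans h1.symm
  -- nonnegativity
  have hnn : ∀ y ∈ (S : Set Hp), ∀ h₁ : L y ∈ Ap.domain,
      (inner ℂ y (L y) : ℂ) = ((‖Ap ⟨L y, h₁⟩‖ : ℝ) : ℂ) ^ 2 ∧
      0 ≤ ((inner ℂ y (L y) : ℂ)).re := by
    intro y hy h₁
    have h := hinner y hy
    refine ⟨h, ?_⟩
    rw [h, ← Complex.ofReal_pow, Complex.ofReal_re]
    positivity
  exact ⟨hadd, hsmul, hbdd, hcpt, hinj, hsa, hnn⟩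
end

section
/- Let U ⊆ ℝ^N be open, q ∈ {0, …, N}, and let Λ be the set of q-element subsets of {1, …, N}, split into Λ^τ = {I ∈ Λ : N ∉ I} and Λ^ρ = {I ∈ Λ : N ∈ I}. Let ε be a matrix-valued function on U with entries ε_{I,J} : U → ℂ (I, J ∈ Λ) that are continuously differentiable and bounded together with their first partial derivatives, such that each matrix ε(x) is Hermitian and ε is uniformly positive definite, i.e. there is δ > 0 with ⟨ε(x)v, v⟩ ≥ δ|v|² for all x ∈ U and v ∈ ℂ^Λ. Let H = (H_I)_{I∈Λ} with all H_I ∈ L²(U), and write (εH)_I := Σ_{J∈Λ} ε_{I,J}·H_J. Assume: for every i ∈ {1, …, N−1} and every I ∈ Λ the weak partial derivatives ∂_i H_I and ∂_i (εH)_I exist in L²(U); for every I ∈ Λ^τ the weak derivative ∂_N H_I exists in L²(U); and for every I ∈ Λ^ρ the weak derivative ∂_N (εH)_I exists in L²(U). Then all weak first partial derivatives ∂_k H_I (k = 1, …, N, I ∈ Λ) exist in L²(U); that is, every component of H belongs to the Sobolev space H¹(U). -/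
open MeasureTheory

/-- `g` is the weak partial derivative `∂ⱼ f` on the open set `U ⊆ ℝ^N`:  for every smooth
test function `φ` compactly supported in `U` one has `∫_U f ∂ⱼφ = -∫_U g φ`. -/
def HasWeakPartialDerivOn {N : ℕ} (U : Set (EuclideanSpace ℝ (Fin N))) (j : Fin N)
    (f g : EuclideanSpace ℝ (Fin N) → ℂ) : Prop :=
  ∀ φ : EuclideanSpace ℝ (Fin N) → ℂ,
    ContDiff ℝ (⊤ : ℕ∞) φ → HasCompactSupport φ → tsupport φ ⊆ U →
    ∫ x in U, f x * fderiv ℝ φ x (EuclideanSpace.single j 1) = -∫ x in U, g x * φ x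


open Metric Set Function Filter
open scoped Convolution Topology Pointwise
set_option synthInstance.maxHeartbeats 1000000
set_option maxHeartbeats 1000000

variable {N : ℕ}

local notation "X" => EuclideanSpace ℝ (Fin N)

lemma integrable_indicator_L2 {U K : Set X} (hK : IsCompact K) {f : X → ℂ}
    (hf : MemLp f 2 (volume.restrict U)) : Integrable (K.indicator f) (volume.restrict U) := by
  have h1 : MemLp f 2 ((volume.restrict U).restrict K) := hf.restrict K
  haveI : IsFiniteMeasure ((volume.restrict U).restrict K) := by
    constructor
    rw [Measure.restrict_apply_univ]
    exact lt_of_le_of_lt (Measure.restrict_le_self K) (hK.measure_lt_top (μ := volume))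
  have h2 : Integrable f ((volume.restrict U).restrict K) := h1.integrable (by norm_num)
  rwa [integrable_indicator_iff hK.measurableSet]

/-- product of an L² function and a bounded measurable function vanishing off a compact set
is integrable. -/
lemma integrable_mul_L2 {U : Set X} (hU : MeasurableSet U) {K : Set X} (hK : IsCompact K)
    {f c : X → ℂ} (hf : MemLp f 2 (volume.restrict U))
    (hc : AEStronglyMeasurable c (volume.restrict U))
    {C : ℝ} (hbd : ∀ x ∈ U, ‖c x‖ ≤ C) (hsupp : ∀ x, x ∉ K → c x = 0) :
    Integrable (fun x => f x * c x) (volume.restrict U) := by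
  have hi := integrable_indicator_L2 hK hf
  refine Integrable.mono' ((hi.norm).const_mul (max C 0)) (hf.aestronglyMeasurable.mul hc) ?_
  rw [ae_restrict_iff' hU]
  filter_upwards with x hx
  by_cases hxK : x ∈ K
  · rw [Set.indicator_of_mem hxK, norm_mul]
    calc ‖f x‖ * ‖c x‖ ≤ ‖f x‖ * max C 0 :=
          mul_le_mul_of_nonneg_left (le_trans (hbd x hx) (le_max_left _ _)) (norm_nonneg _)
      _ = max C 0 * ‖f x‖ := mul_comm _ _
  · rw [hsupp x hxK, mul_zero, Set.indicator_of_notMem hxK]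
    simp

lemma memℒp_mul_L2 {U : Set X} (hU : MeasurableSet U) {a f : X → ℂ}
    (ha : AEStronglyMeasurable a (volume.restrict U)) {M : ℝ} (hbd : ∀ x ∈ U, ‖a x‖ ≤ M)
    (hf : MemLp f 2 (volume.restrict U)) :
    MemLp (fun x => a x * f x) 2 (volume.restrict U) := by
  refine hf.of_le_mul (ha.mul hf.aestronglyMeasurable) ?_ (c := max M 0)
  rw [ae_restrict_iff' hU]
  filter_upwards with x hx
  rw [norm_mul]
  exact mul_le_mul_of_nonneg_right (le_trans (hbd x hx) (le_max_left _ _)) (norm_nonneg _)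


/-- The defining identity of a weak derivative extends to `C¹` test functions. -/
lemma weak_deriv_c1_test {U : Set X} (hU : IsOpen U) {j : Fin N} {f g : X → ℂ}
    (hf : MemLp f 2 (volume.restrict U)) (hg : MemLp g 2 (volume.restrict U))
    (hw : HasWeakPartialDerivOn U j f g) {ψ : X → ℂ} (hψ : ContDiff ℝ 1 ψ)
    (hψc : HasCompactSupport ψ) (hψU : tsupport ψ ⊆ U) :
    ∫ x in U, f x * fderiv ℝ ψ x (EuclideanSpace.single j 1)
      = -∫ x in U, g x * ψ x := by
  classical
  obtain ⟨δ₀, hδ₀, hthick⟩ := hψc.exists_thickening_subset_open hU hψU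
  set r : ℕ → ℝ := fun n => min (δ₀ / 2) (1 / (n + 1)) with hr
  have hr0 : ∀ n, 0 < r n := fun n => lt_min (by positivity) (by positivity)
  have hrδ : ∀ n : ℕ, r n < δ₀ := fun n => lt_of_le_of_lt (min_le_left _ _) (by linarith)
  have hr1 : ∀ n : ℕ, r n ≤ 1 := fun n => le_trans (min_le_right _ _) (by
    rw [div_le_one (by positivity)]
    exact le_add_of_nonneg_left (Nat.cast_nonneg n))
  have hrlim : Tendsto r atTop (𝓝 0) := by
    apply squeeze_zero (fun n => (hr0 n).le) (fun n => min_le_right _ _)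
    exact tendsto_one_div_add_atTop_nhds_zero_nat
  set φ : ℕ → ContDiffBump (0 : X) := fun n =>
    ⟨r n / 2, r n, by positivity, by linarith [hr0 n]⟩ with hφ
  set ψn : ℕ → X → ℂ := fun n =>
    convolution ((φ n).normed volume) ψ (ContinuousLinearMap.lsmul ℝ ℝ) volume with hψn
  have hψloc : LocallyIntegrable ψ volume := hψ.continuous.locallyIntegrable
  set K : Set X := closedBall (0 : X) 1 + tsupport ψ with hKdef
  have hKcomp : IsCompact K := (isCompact_closedBall (0 : X) 1).add hψc
  have hsupp : ∀ n, tsupport (ψn n) ⊆ closedBall 0 (r n) + tsupport ψ := by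
    intro n
    apply closure_minimal _ (((isCompact_closedBall (0:X) (r n)).add hψc).isClosed)
    refine subset_trans (support_convolution_subset _) (Set.add_subset_add ?_ subset_closure)
    rw [(φ n).support_normed_eq]
    exact ball_subset_closedBall
  have hsuppU : ∀ n, tsupport (ψn n) ⊆ U := by
    intro n; refine subset_trans (hsupp n) (subset_trans ?_ hthick)
    rintro x ⟨t, ht, y, hy, rfl⟩
    rw [Metric.mem_thickening_iff]
    refine ⟨y, hy, ?_⟩
    rw [dist_eq_norm, add_sub_cancel_right]
    exact lt_of_le_of_lt (mem_closedBall_zero_iff.mp ht) (hrδ n)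
  have hsuppK : ∀ n, tsupport (ψn n) ⊆ K := fun n => subset_trans (hsupp n)
    (Set.add_subset_add (closedBall_subset_closedBall (hr1 n)) subset_rfl)
  have hψnsm : ∀ n, ContDiff ℝ (⊤ : ℕ∞) (ψn n) := fun n =>
    HasCompactSupport.contDiff_convolution_left _ (φ n).hasCompactSupport_normed
      ((φ n).contDiff_normed) hψloc
  have hψncs : ∀ n, HasCompactSupport (ψn n) :=
    fun n => IsCompact.of_isClosed_subset hKcomp isClosed_closure (hsuppK n)
  have hbloc : ∀ n, LocallyIntegrable ((φ n).normed volume) volume :=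
    fun n => ((φ n).continuous_normed).locallyIntegrable
  set dψ : X → ℂ := fun a => fderiv ℝ ψ a (EuclideanSpace.single j 1) with hdψdef
  have hdψcont : Continuous dψ :=
    (hψ.continuous_fderiv one_ne_zero).clm_apply continuous_const
  have hfd : ∀ n x₀, fderiv ℝ (ψn n) x₀ (EuclideanSpace.single j 1)
      = convolution ((φ n).normed volume) dψ (ContinuousLinearMap.lsmul ℝ ℝ) volume x₀ := by
    intro n x₀
    rw [(HasCompactSupport.hasFDerivAt_convolution_right
      (ContinuousLinearMap.lsmul ℝ ℝ) hψc (hbloc n) hψ x₀).fderiv]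
    exact convolution_precompR_apply (ContinuousLinearMap.lsmul ℝ ℝ) (hbloc n)
      (hψc.fderiv ℝ) (hψ.continuous_fderiv one_ne_zero) x₀ _
  -- uniform bounds for normed-bump convolutions
  have conv_bound : ∀ (h : X → ℂ) (C : ℝ), Continuous h → (∀ x, ‖h x‖ ≤ C) → ∀ n x,
      ‖convolution ((φ n).normed volume) h (ContinuousLinearMap.lsmul ℝ ℝ) volume x‖
        ≤ 3 * C := by
    intro h C hh hhC n x
    have hd : dist (convolution ((φ n).normed volume) h
        (ContinuousLinearMap.lsmul ℝ ℝ) volume x) (h x) ≤ C + C := by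
      apply ContDiffBump.dist_normed_convolution_le hh.aestronglyMeasurable
      intro y _
      exact le_trans (dist_le_norm_add_norm _ _) (add_le_add (hhC y) (hhC x))
    calc ‖convolution ((φ n).normed volume) h (ContinuousLinearMap.lsmul ℝ ℝ) volume x‖
        ≤ dist (convolution ((φ n).normed volume) h
            (ContinuousLinearMap.lsmul ℝ ℝ) volume x) (h x) + ‖h x‖ := by
          rw [dist_eq_norm]
          exact (norm_le_insert' _ _).trans (by rw [add_comm])
      _ ≤ (C + C) + C := add_le_add hd (hhC x)
      _ = 3 * C := by ring
  have conv_tendsto : ∀ (h : X → ℂ), Continuous h → ∀ x,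
      Tendsto (fun n => convolution ((φ n).normed volume) h
        (ContinuousLinearMap.lsmul ℝ ℝ) volume x) atTop (𝓝 (h x)) := by
    intro h hh x
    exact ContDiffBump.convolution_tendsto_right_of_continuous hrlim hh x
  obtain ⟨Cψ, hCψ⟩ := hψc.exists_bound_of_continuous hψ.continuous
  have hdψc : HasCompactSupport dψ := by
    apply HasCompactSupport.intro hψc
    intro x hx
    have : fderiv ℝ ψ x = 0 := notMem_support.mp (fun hs => hx (support_fderiv_subset ℝ hs))
    rw [hdψdef]; simp [this]
  obtain ⟨Cd, hCd⟩ := hdψc.exists_bound_of_continuous hdψcont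
  -- LHS convergence
  have hL : Tendsto (fun n => ∫ x in U, f x * fderiv ℝ (ψn n) x (EuclideanSpace.single j 1))
      atTop (𝓝 (∫ x in U, f x * dψ x)) := by
    apply tendsto_integral_of_dominated_convergence
      (bound := fun x => (3 * Cd) * ‖K.indicator f x‖)
    · intro n
      exact hf.aestronglyMeasurable.mul
        ((((hψnsm n).continuous_fderiv (by simp)).clm_apply continuous_const).aestronglyMeasurable)
    · exact (integrable_indicator_L2 hKcomp hf).norm.const_mul _
    · intro n
      filter_upwards with x
      by_cases hxK : x ∈ K
      · rw [Set.indicator_of_mem hxK, hfd n x, norm_mul, mul_comm]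
        exact mul_le_mul_of_nonneg_right
          (by simpa [mul_comm] using conv_bound dψ Cd hdψcont hCd n x) (norm_nonneg _)
      · have h0 : fderiv ℝ (ψn n) x = 0 :=
          notMem_support.mp (fun hs => hxK (hsuppK n (support_fderiv_subset ℝ hs)))
        rw [Set.indicator_of_notMem hxK, h0]
        simp
    · filter_upwards with x
      have h1 := conv_tendsto dψ hdψcont x
      have h2 : Tendsto (fun n => f x * convolution ((φ n).normed volume) dψ
          (ContinuousLinearMap.lsmul ℝ ℝ) volume x) atTop (𝓝 (f x * dψ x)) :=
        h1.const_mul (f x)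
      refine h2.congr (fun n => ?_)
      rw [hfd n x]
  -- RHS convergence
  have hR : Tendsto (fun n => ∫ x in U, g x * ψn n x)
      atTop (𝓝 (∫ x in U, g x * ψ x)) := by
    apply tendsto_integral_of_dominated_convergence
      (bound := fun x => (3 * Cψ) * ‖K.indicator g x‖)
    · intro n
      exact hg.aestronglyMeasurable.mul ((hψnsm n).continuous.aestronglyMeasurable)
    · exact (integrable_indicator_L2 hKcomp hg).norm.const_mul _
    · intro n
      filter_upwards with x
      by_cases hxK : x ∈ K
      · rw [Set.indicator_of_mem hxK, norm_mul, mul_comm]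
        exact mul_le_mul_of_nonneg_right
          (by simpa [mul_comm] using conv_bound ψ Cψ hψ.continuous hCψ n x) (norm_nonneg _)
      · have h0 : ψn n x = 0 := image_eq_zero_of_notMem_tsupport (fun hs => hxK (hsuppK n hs))
        rw [Set.indicator_of_notMem hxK, h0]
        simp
    · filter_upwards with x
      exact (conv_tendsto ψ hψ.continuous x).const_mul (g x)
  have hEq : ∀ n, ∫ x in U, f x * fderiv ℝ (ψn n) x (EuclideanSpace.single j 1)
      = -∫ x in U, g x * ψn n x := fun n => hw (ψn n) (hψnsm n) (hψncs n) (hsuppU n)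
  have hL' : Tendsto (fun n => -∫ x in U, g x * ψn n x) atTop (𝓝 (∫ x in U, f x * dψ x)) := by
    refine hL.congr (fun n => hEq n)
  exact tendsto_nhds_unique hL' hR.neg


/-- bundle: `f, g ∈ L²(U)` and `g` is the weak `j`-th partial derivative of `f`. -/
def WD (U : Set X) (j : Fin N) (f g : X → ℂ) : Prop :=
  MemLp f 2 (volume.restrict U) ∧ MemLp g 2 (volume.restrict U) ∧
    HasWeakPartialDerivOn U j f g

lemma test_integrable {U : Set X} (hU : MeasurableSet U) {f : X → ℂ}
    (hf : MemLp f 2 (volume.restrict U)) {c : X → ℂ} (hc : Continuous c)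
    (hcs : HasCompactSupport c) :
    Integrable (fun x => f x * c x) (volume.restrict U) := by
  obtain ⟨C, hC⟩ := hcs.exists_bound_of_continuous hc
  exact integrable_mul_L2 hU hcs hf hc.aestronglyMeasurable (fun x _ => hC x)
    (fun x hx => image_eq_zero_of_notMem_tsupport hx)

lemma fderiv_test_cont {φ : X → ℂ} (hφ : ContDiff ℝ (⊤ : ℕ∞) φ) (j : Fin N) :
    Continuous (fun x => fderiv ℝ φ x (EuclideanSpace.single j 1)) :=
  (hφ.continuous_fderiv (by simp)).clm_apply continuous_const

lemma fderiv_test_supp {φ : X → ℂ} (hφc : HasCompactSupport φ) (j : Fin N) :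
    HasCompactSupport (fun x => fderiv ℝ φ x (EuclideanSpace.single j 1)) := by
  apply HasCompactSupport.intro hφc
  intro x hx
  have : fderiv ℝ φ x = 0 := notMem_support.mp (fun hs => hx (support_fderiv_subset ℝ hs))
  simp [this]

lemma WD.sum {U : Set X} (hU : IsOpen U) {j : Fin N} {ι : Type*} {s : Finset ι}
    {F G : ι → X → ℂ} (h : ∀ i ∈ s, WD U j (F i) (G i)) :
    WD U j (fun x => ∑ i ∈ s, F i x) (fun x => ∑ i ∈ s, G i x) := by
  refine ⟨?_, ?_, ?_⟩
  · have := memLp_finset_sum' s (fun i hi => (h i hi).1)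
    have he : (fun x => ∑ i ∈ s, F i x) = ∑ i ∈ s, F i := by funext x; simp
    rwa [he]
  · have := memLp_finset_sum' s (fun i hi => (h i hi).2.1)
    have he : (fun x => ∑ i ∈ s, G i x) = ∑ i ∈ s, G i := by funext x; simp
    rwa [he]
  · intro φ hφ hφc hφU
    obtain ⟨Cd, hCd⟩ := (fderiv_test_supp hφc j).exists_bound_of_continuous (fderiv_test_cont hφ j)
    obtain ⟨Cφ, hCφ⟩ := hφc.exists_bound_of_continuous hφ.continuous
    have e1 : ∫ x in U, (∑ i ∈ s, F i x) * fderiv ℝ φ x (EuclideanSpace.single j 1)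
        = ∑ i ∈ s, ∫ x in U, F i x * fderiv ℝ φ x (EuclideanSpace.single j 1) := by
      rw [← integral_finset_sum]
      · congr 1; funext x; rw [Finset.sum_mul]
      · exact fun i hi => test_integrable hU.measurableSet (h i hi).1
          (fderiv_test_cont hφ j) (fderiv_test_supp hφc j)
    have e2 : ∫ x in U, (∑ i ∈ s, G i x) * φ x = ∑ i ∈ s, ∫ x in U, G i x * φ x := by
      rw [← integral_finset_sum]
      · congr 1; funext x; rw [Finset.sum_mul]
      · exact fun i hi => test_integrable hU.measurableSet (h i hi).2.1 hφ.continuous hφc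
    rw [e1, e2, ← Finset.sum_neg_distrib]
    exact Finset.sum_congr rfl (fun i hi => (h i hi).2.2 φ hφ hφc hφU)

lemma WD.sub {U : Set X} (hU : IsOpen U) {j : Fin N} {f₁ g₁ f₂ g₂ : X → ℂ}
    (h₁ : WD U j f₁ g₁) (h₂ : WD U j f₂ g₂) :
    WD U j (fun x => f₁ x - f₂ x) (fun x => g₁ x - g₂ x) := by
  refine ⟨h₁.1.sub h₂.1, h₁.2.1.sub h₂.2.1, ?_⟩
  intro φ hφ hφc hφU
  have i1 := test_integrable hU.measurableSet h₁.1 (fderiv_test_cont hφ j) (fderiv_test_supp hφc j)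
  have i2 := test_integrable hU.measurableSet h₂.1 (fderiv_test_cont hφ j) (fderiv_test_supp hφc j)
  have i3 := test_integrable hU.measurableSet h₁.2.1 hφ.continuous hφc
  have i4 := test_integrable hU.measurableSet h₂.2.1 hφ.continuous hφc
  have e1 : ∫ x in U, (f₁ x - f₂ x) * fderiv ℝ φ x (EuclideanSpace.single j 1)
      = (∫ x in U, f₁ x * fderiv ℝ φ x (EuclideanSpace.single j 1))
        - ∫ x in U, f₂ x * fderiv ℝ φ x (EuclideanSpace.single j 1) := by
    rw [← integral_sub i1 i2]; congr 1; funext x; ring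
  have e2 : ∫ x in U, (g₁ x - g₂ x) * φ x
      = (∫ x in U, g₁ x * φ x) - ∫ x in U, g₂ x * φ x := by
    rw [← integral_sub i3 i4]; congr 1; funext x; ring
  rw [e1, e2, h₁.2.2 φ hφ hφc hφU, h₂.2.2 φ hφ hφc hφU]
  ring

lemma WD.congr {U : Set X} (hU : IsOpen U) {j : Fin N} {f f' g : X → ℂ}
    (h : WD U j f g) (heq : ∀ x ∈ U, f x = f' x)
    (hf' : MemLp f' 2 (volume.restrict U)) : WD U j f' g := by
  refine ⟨hf', h.2.1, ?_⟩
  intro φ hφ hφc hφU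
  rw [setIntegral_congr_fun hU.measurableSet
    (fun x hx => by dsimp only; rw [← heq x hx] :
      Set.EqOn (fun x => f' x * fderiv ℝ φ x (EuclideanSpace.single j 1))
        (fun x => f x * fderiv ℝ φ x (EuclideanSpace.single j 1)) U)]
  exact h.2.2 φ hφ hφc hφU

/-- Product rule for weak derivatives with a `C¹` coefficient bounded with bounded
derivative on `U`. -/
lemma WD.mul {U : Set X} (hU : IsOpen U) {j : Fin N} {a f g : X → ℂ} {M : ℝ}
    (ha : ContDiffOn ℝ 1 a U)
    (haM : ∀ x ∈ U, ‖a x‖ ≤ M) (haM' : ∀ x ∈ U, ‖fderivWithin ℝ a U x‖ ≤ M)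
    (h : WD U j f g) :
    WD U j (fun x => a x * f x)
      (fun x => fderivWithin ℝ a U x (EuclideanSpace.single j 1) * f x + a x * g x) := by
  have haSM : AEStronglyMeasurable a (volume.restrict U) :=
    ha.continuousOn.aestronglyMeasurable hU.measurableSet
  have hdaSM : AEStronglyMeasurable (fun x => fderivWithin ℝ a U x (EuclideanSpace.single j 1))
      (volume.restrict U) :=
    ((ha.continuousOn_fderivWithin hU.uniqueDiffOn le_rfl).clm_apply
      continuousOn_const).aestronglyMeasurable hU.measurableSet
  have hdabd : ∀ x ∈ U, ‖fderivWithin ℝ a U x (EuclideanSpace.single j 1)‖ ≤ M := by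
    intro x hx
    calc ‖fderivWithin ℝ a U x (EuclideanSpace.single j 1)‖
        ≤ ‖fderivWithin ℝ a U x‖ * ‖(EuclideanSpace.single j 1 : X)‖ :=
          ContinuousLinearMap.le_opNorm _ _
      _ = ‖fderivWithin ℝ a U x‖ := by rw [EuclideanSpace.norm_single]; simp
      _ ≤ M := haM' x hx
  refine ⟨memℒp_mul_L2 hU.measurableSet haSM haM h.1, ?_, ?_⟩
  · exact (memℒp_mul_L2 hU.measurableSet hdaSM hdabd h.1).add
      (memℒp_mul_L2 hU.measurableSet haSM haM h.2.1)
  intro φ hφ hφc hφU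
  obtain ⟨Cφ, hCφ⟩ := hφc.exists_bound_of_continuous hφ.continuous
  obtain ⟨Cd, hCd⟩ := (fderiv_test_supp hφc j).exists_bound_of_continuous (fderiv_test_cont hφ j)
  set e₀ : X := EuclideanSpace.single j 1 with he₀
  set da : X → ℂ := fun x => fderivWithin ℝ a U x e₀ with hda
  set dφ : X → ℂ := fun x => fderiv ℝ φ x e₀ with hdφ
  set ψ : X → ℂ := fun x => a x * φ x with hψdef
  have hψ : ContDiff ℝ 1 ψ := by
    rw [contDiff_iff_contDiffAt]
    intro x
    by_cases hx : x ∈ U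
    · exact ((ha x hx).contDiffAt (hU.mem_nhds hx)).mul
        (hφ.contDiffAt.of_le (by exact_mod_cast le_top))
    · have hxc : x ∈ (tsupport φ)ᶜ := fun hc => hx (hφU hc)
      have hev : (fun y => (0:ℂ)) =ᶠ[𝓝 x] ψ := by
        filter_upwards [(isClosed_tsupport φ).isOpen_compl.mem_nhds hxc] with y hy
        rw [hψdef]
        simp [image_eq_zero_of_notMem_tsupport hy]
      exact (contDiffAt_const (c := (0:ℂ))).congr_of_eventuallyEq hev.symm
  have hψsupp : support ψ ⊆ support φ := by
    intro x hx
    rw [mem_support] at hx ⊢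
    intro h0; apply hx; rw [hψdef]; simp [h0]
  have hψc : HasCompactSupport ψ := hφc.mono hψsupp
  have hψU : tsupport ψ ⊆ U := subset_trans (closure_mono hψsupp) hφU
  have key := weak_deriv_c1_test hU h.1 h.2.1 h.2.2 hψ hψc hψU
  have hder : ∀ x ∈ U, fderiv ℝ ψ x e₀ = da x * φ x + a x * dφ x := by
    intro x hx
    have hax : DifferentiableAt ℝ a x :=
      ((ha x hx).contDiffAt (hU.mem_nhds hx)).differentiableAt one_ne_zero
    have hφx : DifferentiableAt ℝ φ x :=
      hφ.differentiable (by simp) x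
    have : fderiv ℝ ψ x = a x • fderiv ℝ φ x + φ x • fderiv ℝ a x := fderiv_mul hax hφx
    show (fderiv ℝ ψ x) e₀ = (fderivWithin ℝ a U x) e₀ * φ x + a x * (fderiv ℝ φ x) e₀
    rw [this, fderivWithin_of_isOpen hU hx]
    simp only [ContinuousLinearMap.add_apply, ContinuousLinearMap.smul_apply, smul_eq_mul]
    ring
  -- integrability of the three pieces
  have I1 : Integrable (fun x => f x * (da x * φ x)) (volume.restrict U) := by
    refine integrable_mul_L2 hU.measurableSet hφc h.1
      (hdaSM.mul hφ.continuous.aestronglyMeasurable) (C := M * Cφ) ?_ ?_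
    · intro x hx
      rw [norm_mul]
      exact mul_le_mul (hdabd x hx) (hCφ x) (norm_nonneg _)
        (le_trans (norm_nonneg _) (hdabd x hx))
    · intro x hx
      simp [image_eq_zero_of_notMem_tsupport hx]
  have I2 : Integrable (fun x => f x * (a x * dφ x)) (volume.restrict U) := by
    refine integrable_mul_L2 hU.measurableSet hφc h.1
      (haSM.mul (fderiv_test_cont hφ j).aestronglyMeasurable) (C := M * Cd) ?_ ?_
    · intro x hx
      rw [norm_mul]
      exact mul_le_mul (haM x hx) (hCd x) (norm_nonneg _)
        (le_trans (norm_nonneg _) (haM x hx))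
    · intro x hx
      have : fderiv ℝ φ x = 0 := notMem_support.mp (fun hs => hx (support_fderiv_subset ℝ hs))
      simp [hdφ, this]
  have I3 : Integrable (fun x => g x * (a x * φ x)) (volume.restrict U) := by
    refine integrable_mul_L2 hU.measurableSet hφc h.2.1
      (haSM.mul hφ.continuous.aestronglyMeasurable) (C := M * Cφ) ?_ ?_
    · intro x hx
      rw [norm_mul]
      exact mul_le_mul (haM x hx) (hCφ x) (norm_nonneg _)
        (le_trans (norm_nonneg _) (haM x hx))
    · intro x hx
      simp [image_eq_zero_of_notMem_tsupport hx]
  have hsplit : ∫ x in U, f x * fderiv ℝ ψ x e₀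
      = (∫ x in U, f x * (da x * φ x)) + ∫ x in U, f x * (a x * dφ x) := by
    rw [← integral_add I1 I2]
    apply setIntegral_congr_fun hU.measurableSet
    intro x hx
    show f x * (fderiv ℝ ψ x) e₀ = f x * (da x * φ x) + f x * (a x * dφ x)
    rw [hder x hx]
    ring
  have hgψ : ∫ x in U, g x * ψ x = ∫ x in U, g x * (a x * φ x) := rfl
  have goal1 : ∫ x in U, (a x * f x) * dφ x = ∫ x in U, f x * (a x * dφ x) := by
    apply setIntegral_congr_fun hU.measurableSet
    intro x _
    ring
  have goal2 : ∫ x in U, (da x * f x + a x * g x) * φ x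
      = (∫ x in U, f x * (da x * φ x)) + ∫ x in U, g x * (a x * φ x) := by
    rw [← integral_add I1 I3]
    apply setIntegral_congr_fun hU.measurableSet
    intro x _
    ring
  rw [goal1, goal2]
  rw [← he₀, hsplit, hgψ] at key
  linear_combination key


section MatrixField

lemma contDiffOn_finset_prod {U : Set X} {α : Type*} {s : Finset α} {F : α → X → ℂ}
    (h : ∀ i ∈ s, ContDiffOn ℝ 1 (F i) U) :
    ContDiffOn ℝ 1 (fun x => ∏ i ∈ s, F i x) U := fun x hx =>
  contDiffWithinAt_prod (fun i hi => (h i hi) x hx)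

lemma contDiffOn_finset_sum {U : Set X} {α : Type*} {s : Finset α} {F : α → X → ℂ}
    (h : ∀ i ∈ s, ContDiffOn ℝ 1 (F i) U) :
    ContDiffOn ℝ 1 (fun x => ∑ i ∈ s, F i x) U := by
  classical
  induction s using Finset.induction_on with
  | empty => simpa using contDiffOn_const
  | insert a s hni ih =>
      simp only [Finset.sum_insert hni]
      exact (h a (Finset.mem_insert_self a s)).add
        (ih (fun i hi => h i (Finset.mem_insert_of_mem hi)))

lemma contDiffOn_det {ι : Type*} [Fintype ι] [DecidableEq ι] {U : Set X} {A : X → Matrix ι ι ℂ}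
    (hA : ∀ i j, ContDiffOn ℝ 1 (fun x => A x i j) U) :
    ContDiffOn ℝ 1 (fun x => (A x).det) U := by
  have heq : (fun x => (A x).det)
      = fun x => ∑ σ : Equiv.Perm ι, ((Equiv.Perm.sign σ : ℤ) : ℂ) * ∏ i, A x (σ i) i := by
    funext x
    rw [Matrix.det_apply]
    congr 1
    funext σ
    rw [Units.smul_def, zsmul_eq_mul]
  rw [heq]
  apply contDiffOn_finset_sum
  intro σ _
  exact contDiffOn_const.mul (contDiffOn_finset_prod (fun i _ => hA (σ i) i))

lemma contDiffOn_adjugate {ι : Type*} [Fintype ι] [DecidableEq ι] {U : Set X} {A : X → Matrix ι ι ℂ}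
    (hA : ∀ i j, ContDiffOn ℝ 1 (fun x => A x i j) U) (i j : ι) :
    ContDiffOn ℝ 1 (fun x => (A x).adjugate i j) U := by
  have heq : (fun x => (A x).adjugate i j)
      = fun x => ((A x).updateRow j (Pi.single i 1)).det := by
    funext x
    rw [Matrix.adjugate_apply]
  rw [heq]
  apply contDiffOn_det
  intro k l
  by_cases hk : k = j
  · subst hk
    simp only [Matrix.updateRow_self]
    exact contDiffOn_const
  · simp only [Matrix.updateRow_apply, if_neg hk]
    exact hA k l

lemma contDiffOn_inv_entry {ι : Type*} [Fintype ι] [DecidableEq ι] {U : Set X} {A : X → Matrix ι ι ℂ}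
    (hA : ∀ i j, ContDiffOn ℝ 1 (fun x => A x i j) U)
    (hunit : ∀ x ∈ U, IsUnit (A x).det) (i j : ι) :
    ContDiffOn ℝ 1 (fun x => (A x)⁻¹ i j) U := by
  have heq : ∀ x ∈ U, (A x)⁻¹ i j = ((A x).det)⁻¹ * (A x).adjugate i j := by
    intro x hx
    rw [Matrix.inv_def, Matrix.smul_apply, Ring.inverse_eq_inv', smul_eq_mul]
  apply ContDiffOn.congr _ heq
  exact ((contDiffOn_det hA).inv (fun x hx => (hunit x hx).ne_zero)).mul
    (contDiffOn_adjugate hA i j)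

/-- Coercivity implies a quantitative lower bound on `mulVec`. -/
lemma quad_lower_bound {ι : Type*} [Fintype ι] {δ : ℝ} (hδ : 0 < δ) {A : Matrix ι ι ℂ}
    (hpos : ∀ w : ι → ℂ, δ * ∑ i, ‖w i‖ ^ 2
      ≤ (∑ i, (∑ j, A i j * w j) * (starRingEnd ℂ) (w i)).re)
    (w : ι → ℂ) :
    δ * Real.sqrt (∑ i, ‖w i‖ ^ 2) ≤ Real.sqrt (∑ i, ‖A.mulVec w i‖ ^ 2) := by
  set W : EuclideanSpace ℂ ι := (WithLp.equiv 2 (ι → ℂ)).symm w with hW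
  set V : EuclideanSpace ℂ ι := (WithLp.equiv 2 (ι → ℂ)).symm (A.mulVec w) with hV
  have hWn : ‖W‖ = Real.sqrt (∑ i, ‖w i‖ ^ 2) := by
    rw [EuclideanSpace.norm_eq]; rfl
  have hVn : ‖V‖ = Real.sqrt (∑ i, ‖A.mulVec w i‖ ^ 2) := by
    rw [EuclideanSpace.norm_eq]; rfl
  have hinner : (inner ℂ W V : ℂ) = ∑ i, (∑ j, A i j * w j) * (starRingEnd ℂ) (w i) := by
    rw [PiLp.inner_apply]
    congr 1
  have h1 : δ * (‖W‖ ^ 2) ≤ ‖W‖ * ‖V‖ := by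
    have h2 : (inner ℂ W V : ℂ).re ≤ ‖W‖ * ‖V‖ := by
      calc (inner ℂ W V : ℂ).re ≤ ‖(inner ℂ W V : ℂ)‖ := Complex.re_le_norm _
        _ ≤ ‖W‖ * ‖V‖ := norm_inner_le_norm W V
    have h3 : ‖W‖ ^ 2 = ∑ i, ‖w i‖ ^ 2 := by
      rw [hWn, Real.sq_sqrt]
      exact Finset.sum_nonneg (fun i _ => by positivity)
    rw [h3]
    calc δ * ∑ i, ‖w i‖ ^ 2 ≤ (∑ i, (∑ j, A i j * w j) * (starRingEnd ℂ) (w i)).re := hpos w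
      _ = (inner ℂ W V : ℂ).re := by rw [hinner]
      _ ≤ ‖W‖ * ‖V‖ := h2
  rw [← hWn, ← hVn]
  rcases eq_or_lt_of_le (norm_nonneg W) with h0 | h0
  · rw [← h0, mul_zero]
    exact norm_nonneg V
  · have := (mul_le_mul_iff_of_pos_right h0).mp (by nlinarith [h1] : δ * ‖W‖ * ‖W‖ ≤ ‖V‖ * ‖W‖)
    linarith
end MatrixField

lemma isUnit_of_coercive {ι : Type*} [Fintype ι] [DecidableEq ι] {δ : ℝ} (hδ : 0 < δ)
    {A : Matrix ι ι ℂ}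
    (hpos : ∀ w : ι → ℂ, δ * ∑ i, ‖w i‖ ^ 2
      ≤ (∑ i, (∑ j, A i j * w j) * (starRingEnd ℂ) (w i)).re) :
    IsUnit A := by
  rw [← Matrix.mulVec_injective_iff_isUnit]
  intro u v huv
  have h0 : A.mulVec (u - v) = 0 := by rw [Matrix.mulVec_sub, huv, sub_self]
  have hq := quad_lower_bound hδ hpos (u - v)
  rw [h0] at hq
  simp only [Pi.zero_apply, norm_zero] at hq
  rw [show ((0:ℝ) ^ 2) = 0 by ring] at hq
  rw [Finset.sum_const, smul_zero, Real.sqrt_zero] at hq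
  have hs0 : Real.sqrt (∑ i, ‖(u - v) i‖ ^ 2) = 0 := by
    have := Real.sqrt_nonneg (∑ i, ‖(u - v) i‖ ^ 2)
    nlinarith
  have hsum : (∑ i, ‖(u - v) i‖ ^ 2) = 0 := by
    have hnn : 0 ≤ ∑ i, ‖(u - v) i‖ ^ 2 :=
      Finset.sum_nonneg (fun i _ => by positivity)
    rwa [Real.sqrt_eq_zero hnn] at hs0
  have hzero : ∀ i, (u - v) i = 0 := by
    intro i
    have h := (Finset.sum_eq_zero_iff_of_nonneg
      (fun i (_ : i ∈ Finset.univ) => by positivity)).mp hsum i (Finset.mem_univ i)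
    have : ‖(u - v) i‖ = 0 := by nlinarith [norm_nonneg ((u - v) i)]
    exact norm_eq_zero.mp this
  funext i
  have := hzero i
  rw [Pi.sub_apply, sub_eq_zero] at this
  exact this

lemma inv_entry_bound {ι : Type*} [Fintype ι] [DecidableEq ι] {δ : ℝ} (hδ : 0 < δ)
    {A : Matrix ι ι ℂ}
    (hpos : ∀ w : ι → ℂ, δ * ∑ i, ‖w i‖ ^ 2
      ≤ (∑ i, (∑ j, A i j * w j) * (starRingEnd ℂ) (w i)).re)
    (i j : ι) : ‖A⁻¹ i j‖ ≤ 1 / δ := by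
  have hunit : IsUnit A := isUnit_of_coercive hδ hpos
  have hAB : A * A⁻¹ = 1 := Matrix.mul_nonsing_inv A ((Matrix.isUnit_iff_isUnit_det A).mp hunit)
  set u : ι → ℂ := fun k => A⁻¹ k j with hu
  have hmv : A.mulVec u = fun i' => (1 : Matrix ι ι ℂ) i' j := by
    funext i'
    calc A.mulVec u i' = ∑ k, A i' k * A⁻¹ k j := rfl
      _ = (A * A⁻¹) i' j := (Matrix.mul_apply).symm
      _ = (1 : Matrix ι ι ℂ) i' j := by rw [hAB]
  have hq := quad_lower_bound hδ hpos u
  rw [hmv] at hq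
  have hrhs : (∑ i', ‖(1 : Matrix ι ι ℂ) i' j‖ ^ 2) = 1 := by
    rw [Finset.sum_eq_single j]
    · simp [Matrix.one_apply]
    · intro b _ hb
      simp [Matrix.one_apply, hb]
    · intro h; exact absurd (Finset.mem_univ j) h
  rw [hrhs, Real.sqrt_one] at hq
  have hle : ‖u i‖ ≤ Real.sqrt (∑ k, ‖u k‖ ^ 2) := by
    rw [show ‖u i‖ = Real.sqrt (‖u i‖ ^ 2) by rw [Real.sqrt_sq (norm_nonneg _)]]
    apply Real.sqrt_le_sqrt
    exact Finset.single_le_sum (f := fun k => ‖u k‖ ^ 2)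
      (fun k (_ : k ∈ Finset.univ) => by positivity) (Finset.mem_univ i)
  rw [le_div_iff₀ hδ]
  calc ‖u i‖ * δ = δ * ‖u i‖ := mul_comm _ _
    _ ≤ δ * Real.sqrt (∑ k, ‖u k‖ ^ 2) :=
        mul_le_mul_of_nonneg_left hle hδ.le
    _ ≤ 1 := hq

lemma inv_entry_deriv_bound {ι : Type*} [Fintype ι] [DecidableEq ι] {U : Set X} (hU : IsOpen U)
    {A : X → Matrix ι ι ℂ}
    (hsm : ∀ i j, ContDiffOn ℝ 1 (fun x => A x i j) U)
    (hunit : ∀ x ∈ U, IsUnit (A x).det)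
    {M δinv : ℝ}
    (hM : ∀ i j, ∀ x ∈ U, ‖fderivWithin ℝ (fun y => A y i j) U x‖ ≤ M)
    (hB : ∀ x ∈ U, ∀ i j, ‖(A x)⁻¹ i j‖ ≤ δinv)
    {x : X} (hx : x ∈ U) (l m : ι) :
    ‖fderivWithin ℝ (fun y => (A y)⁻¹ l m) U x‖ ≤ (Fintype.card ι)^2 * (δinv^2 * M) := by
  have hBsm : ∀ i j, ContDiffOn ℝ 1 (fun x => (A x)⁻¹ i j) U := contDiffOn_inv_entry hsm hunit
  set Da : ι → ι → (EuclideanSpace ℝ (Fin N) →L[ℝ] ℂ) :=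
    fun i k => fderivWithin ℝ (fun y => A y i k) U x with hDa
  set E : ι → ι → (EuclideanSpace ℝ (Fin N) →L[ℝ] ℂ) :=
    fun k m' => fderivWithin ℝ (fun y => (A y)⁻¹ k m') U x with hE
  have hdiffA : ∀ i k, HasFDerivWithinAt (fun y => A y i k) (Da i k) U x :=
    fun i k => ((hsm i k).differentiableOn one_ne_zero x hx).hasFDerivWithinAt
  have hdiffB : ∀ k m', HasFDerivWithinAt (fun y => (A y)⁻¹ k m') (E k m') U x :=
    fun k m' => ((hBsm k m').differentiableOn one_ne_zero x hx).hasFDerivWithinAt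
  have hS : ∀ i, (∑ k, (A x i k • E k m + (A x)⁻¹ k m • Da i k)) = 0 := by
    intro i
    have h1 : HasFDerivWithinAt (fun y => ∑ k, A y i k * (A y)⁻¹ k m)
        (∑ k, (A x i k • E k m + (A x)⁻¹ k m • Da i k)) U x :=
      HasFDerivWithinAt.fun_sum (fun k _ => (hdiffA i k).mul (hdiffB k m))
    have heqon : ∀ y ∈ U, (fun y => ∑ k, A y i k * (A y)⁻¹ k m) y
        = (fun _ => (1 : Matrix ι ι ℂ) i m) y := by
      intro y hy
      show ∑ k, A y i k * (A y)⁻¹ k m = (1 : Matrix ι ι ℂ) i m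
      rw [← Matrix.mul_apply, Matrix.mul_nonsing_inv (A y) (hunit y hy)]
    have h2 : HasFDerivWithinAt (fun y => ∑ k, A y i k * (A y)⁻¹ k m)
        (0 : EuclideanSpace ℝ (Fin N) →L[ℝ] ℂ) U x :=
      (hasFDerivWithinAt_const ((1 : Matrix ι ι ℂ) i m) x U).congr heqon (heqon x hx)
    exact (hU.uniqueDiffOn x hx).eq h1 h2
  have hBA : ∀ k, (∑ i, (A x)⁻¹ l i * A x i k) = (1 : Matrix ι ι ℂ) l k := by
    intro k
    rw [← Matrix.mul_apply, Matrix.nonsing_inv_mul (A x) (hunit x hx)]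
  have hSv : ∀ (i : ι) (v : EuclideanSpace ℝ (Fin N)),
      ∑ k, (A x i k * E k m v + (A x)⁻¹ k m * Da i k v) = 0 := by
    intro i v
    have := congrArg (fun L : EuclideanSpace ℝ (Fin N) →L[ℝ] ℂ => L v) (hS i)
    simpa [ContinuousLinearMap.sum_apply, ContinuousLinearMap.add_apply,
      ContinuousLinearMap.smul_apply, smul_eq_mul] using this
  have hformula : ∀ v, E l m v = -∑ i, ∑ k, ((A x)⁻¹ l i * (A x)⁻¹ k m) * Da i k v := by
    intro v
    have h0 : ∑ i, (A x)⁻¹ l i * (∑ k, (A x i k * E k m v + (A x)⁻¹ k m * Da i k v)) = 0 := by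
      simp [hSv]
    have e1 : ∀ i, (A x)⁻¹ l i * (∑ k, (A x i k * E k m v + (A x)⁻¹ k m * Da i k v))
        = (∑ k, ((A x)⁻¹ l i * A x i k) * E k m v)
          + ∑ k, ((A x)⁻¹ l i * (A x)⁻¹ k m) * Da i k v := by
      intro i
      rw [Finset.mul_sum, ← Finset.sum_add_distrib]
      congr 1
      funext k
      ring
    rw [Finset.sum_congr rfl (fun i _ => e1 i), Finset.sum_add_distrib] at h0
    have e2 : (∑ i : ι, ∑ k : ι, ((A x)⁻¹ l i * A x i k) * E k m v) = E l m v := by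
      rw [Finset.sum_comm]
      have e3 : ∀ k : ι, (∑ i : ι, ((A x)⁻¹ l i * A x i k) * E k m v)
          = ((1 : Matrix ι ι ℂ) l k) * E k m v := by
        intro k
        rw [← Finset.sum_mul, hBA k]
      rw [Finset.sum_congr rfl (fun k _ => e3 k), Finset.sum_eq_single l]
      · simp [Matrix.one_apply]
      · intro b _ hb
        simp [Matrix.one_apply_ne (Ne.symm hb)]
      · intro h
        exact absurd (Finset.mem_univ l) h
    rw [e2] at h0
    exact eq_neg_of_add_eq_zero_left h0
  show ‖E l m‖ ≤ _
  have hδinv0 : 0 ≤ δinv := le_trans (norm_nonneg _) (hB x hx l l)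
  have hM0 : 0 ≤ M := le_trans (norm_nonneg _) (hM l l x hx)
  apply ContinuousLinearMap.opNorm_le_bound _ (by positivity)
  intro v
  rw [hformula v, norm_neg]
  calc ‖∑ i : ι, ∑ k : ι, ((A x)⁻¹ l i * (A x)⁻¹ k m) * Da i k v‖
      ≤ ∑ i : ι, ∑ k : ι, ‖((A x)⁻¹ l i * (A x)⁻¹ k m) * Da i k v‖ :=
        le_trans (norm_sum_le _ _) (Finset.sum_le_sum (fun i _ => norm_sum_le _ _))
    _ ≤ ∑ _i : ι, ∑ _k : ι, δinv ^ 2 * M * ‖v‖ := by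
        refine Finset.sum_le_sum (fun i _ => Finset.sum_le_sum (fun k _ => ?_))
        rw [norm_mul, norm_mul]
        have h1 : ‖Da i k v‖ ≤ M * ‖v‖ := le_trans (ContinuousLinearMap.le_opNorm _ _)
            (mul_le_mul_of_nonneg_right (hM i k x hx) (norm_nonneg _))
        calc ‖(A x)⁻¹ l i‖ * ‖(A x)⁻¹ k m‖ * ‖Da i k v‖
            ≤ (δinv * δinv) * (M * ‖v‖) :=
              mul_le_mul (mul_le_mul (hB x hx l i) (hB x hx k m) (norm_nonneg _) hδinv0)
                h1 (norm_nonneg _) (by positivity)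
          _ = δinv ^ 2 * M * ‖v‖ := by ring
    _ = (Fintype.card ι)^2 * (δinv^2 * M) * ‖v‖ := by
        simp only [Finset.sum_const, Finset.card_univ, nsmul_eq_mul]
        ring



/-- Let `U ⊆ ℝ^(N+1)` be open and let `ε` be a Hermitian, uniformly
positive definite matrix field on `U`, indexed by the `q`-element coordinate subsets, with
`C¹` entries bounded together with their first derivatives.  Let `H = (H_I)` have all
components in `L²(U)`, and assume:  all tangential weak derivatives `∂ᵢ H_I` and
`∂ᵢ (εH)_I` (`i` not the last coordinate) exist in `L²(U)`, the normal weak derivative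
`∂_N H_I` exists for the tangential components (`last ∉ I`), and `∂_N (εH)_I` exists for
the normal components (`last ∈ I`).  Then all weak first partial derivatives of all
components of `H` exist in `L²(U)`, i.e. every component of `H` belongs to `H¹(U)`. -/
theorem stmt_12 (N q : ℕ) (hq : q ≤ N + 1)
    (U : Set (EuclideanSpace ℝ (Fin (N + 1)))) (hU : IsOpen U)
    (ε : Finset (Fin (N + 1)) → Finset (Fin (N + 1)) →
      EuclideanSpace ℝ (Fin (N + 1)) → ℂ)
    (hεsmooth : ∀ I J : Finset (Fin (N + 1)), I.card = q → J.card = q →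
      ContDiffOn ℝ 1 (ε I J) U)
    (hεbdd : ∃ M : ℝ, ∀ I J : Finset (Fin (N + 1)), I.card = q → J.card = q →
      ∀ x ∈ U, ‖ε I J x‖ ≤ M ∧ ‖fderivWithin ℝ (ε I J) U x‖ ≤ M)
    (hεherm : ∀ I J : Finset (Fin (N + 1)), I.card = q → J.card = q →
      ∀ x ∈ U, ε I J x = (starRingEnd ℂ) (ε J I x))
    (hεpos : ∃ δ : ℝ, 0 < δ ∧ ∀ x ∈ U, ∀ v : Finset (Fin (N + 1)) → ℂ,
      δ * ∑ I ∈ Finset.univ.powersetCard q, ‖v I‖ ^ 2 ≤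
        (∑ I ∈ Finset.univ.powersetCard q,
          (∑ J ∈ Finset.univ.powersetCard q, ε I J x * v J) *
            (starRingEnd ℂ) (v I)).re)
    (H : Finset (Fin (N + 1)) → EuclideanSpace ℝ (Fin (N + 1)) → ℂ)
    (hH : ∀ I : Finset (Fin (N + 1)), I.card = q → MemLp (H I) 2 (volume.restrict U))
    -- all tangential weak derivatives of `H` and of `εH` exist in `L²(U)`
    (htan : ∀ i : Fin (N + 1), i ≠ Fin.last N →
      ∀ I : Finset (Fin (N + 1)), I.card = q →
        (∃ g, MemLp g 2 (volume.restrict U) ∧ HasWeakPartialDerivOn U i (H I) g) ∧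
        (∃ g, MemLp g 2 (volume.restrict U) ∧
          HasWeakPartialDerivOn U i
            (fun x => ∑ J ∈ Finset.univ.powersetCard q, ε I J x * H J x) g))
    -- the normal weak derivative of the tangential components of `H` exists in `L²(U)`
    (hnormτ : ∀ I : Finset (Fin (N + 1)), I.card = q → Fin.last N ∉ I →
      ∃ g, MemLp g 2 (volume.restrict U) ∧
        HasWeakPartialDerivOn U (Fin.last N) (H I) g)
    -- the normal weak derivative of the normal components of `εH` exists in `L²(U)`
    (hnormρ : ∀ I : Finset (Fin (N + 1)), I.card = q → Fin.last N ∈ I →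
      ∃ g, MemLp g 2 (volume.restrict U) ∧
        HasWeakPartialDerivOn U (Fin.last N)
          (fun x => ∑ J ∈ Finset.univ.powersetCard q, ε I J x * H J x) g) :
    ∀ k : Fin (N + 1), ∀ I : Finset (Fin (N + 1)), I.card = q →
      ∃ g, MemLp g 2 (volume.restrict U) ∧ HasWeakPartialDerivOn U k (H I) g := by
  classical
  intro k I hI
  by_cases hk : k = Fin.last N
  case neg => exact (htan k hk I hI).1
  subst hk
  by_cases hIl : Fin.last N ∈ I
  case neg => exact hnormτ I hI hIl
  -- ======== the hard case ========
  obtain ⟨M, hM⟩ := hεbdd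
  obtain ⟨δ, hδ, hpos⟩ := hεpos
  set Λ : Finset (Finset (Fin (N + 1))) := Finset.univ.powersetCard q with hΛ
  set ρ : Finset (Finset (Fin (N + 1))) := Λ.filter (fun J => Fin.last N ∈ J) with hρ
  set τf : Finset (Finset (Fin (N + 1))) := Λ.filter (fun J => Fin.last N ∉ J) with hτ
  have hcardΛ : ∀ J ∈ Λ, J.card = q := fun J hJ => Finset.mem_powersetCard_univ.mp hJ
  -- index types
  let ι := {J : Finset (Fin (N + 1)) // J ∈ ρ}
  let κ := {J : Finset (Fin (N + 1)) // J ∈ τf}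
  have cardi : ∀ i : ι, i.1.card = q := fun i => hcardΛ i.1 (Finset.mem_filter.mp i.2).1
  have memlast : ∀ i : ι, Fin.last N ∈ i.1 := fun i => (Finset.mem_filter.mp i.2).2
  have cardκ : ∀ j : κ, j.1.card = q := fun j => hcardΛ j.1 (Finset.mem_filter.mp j.2).1
  have notlastκ : ∀ j : κ, Fin.last N ∉ j.1 := fun j => (Finset.mem_filter.mp j.2).2
  have hIρ : I ∈ ρ := Finset.mem_filter.mpr ⟨Finset.mem_powersetCard_univ.mpr hI, hIl⟩
  let i₀ : ι := ⟨I, hIρ⟩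
  -- the matrix field
  set Amat : EuclideanSpace ℝ (Fin (N + 1)) → Matrix ι ι ℂ :=
    fun x i j => ε i.1 j.1 x with hAmat
  have hAsm : ∀ i j : ι, ContDiffOn ℝ 1 (fun x => Amat x i j) U :=
    fun i j => hεsmooth i.1 j.1 (cardi i) (cardi j)
  have hMA : ∀ i j : ι, ∀ x ∈ U, ‖fderivWithin ℝ (fun y => Amat y i j) U x‖ ≤ M :=
    fun i j x hx => (hM i.1 j.1 (cardi i) (cardi j) x hx).2
  -- coercivity transfer
  have hposA : ∀ x ∈ U, ∀ w : ι → ℂ, δ * ∑ i, ‖w i‖ ^ 2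
      ≤ (∑ i, (∑ j, Amat x i j * w j) * (starRingEnd ℂ) (w i)).re := by
    intro x hx w
    set v : Finset (Fin (N + 1)) → ℂ := fun J => if h : J ∈ ρ then w ⟨J, h⟩ else 0 with hv
    have hvρ : ∀ J (h : J ∈ ρ), v J = w ⟨J, h⟩ := fun J h => dif_pos h
    have hvn : ∀ J, J ∉ ρ → v J = 0 := fun J h => dif_neg h
    have h1 := hpos x hx v
    have ha : (∑ J ∈ Λ, ‖v J‖ ^ 2) = ∑ i : ι, ‖w i‖ ^ 2 := by
      rw [← Finset.sum_subset (Finset.filter_subset (fun J => Fin.last N ∈ J) Λ)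
        (fun J hJ hJρ => by rw [hvn J hJρ]; simp)]
      rw [← Finset.sum_coe_sort ρ (fun J => ‖v J‖ ^ 2)]
      exact Finset.sum_congr rfl (fun i _ => by rw [hvρ i.1 i.2])
    have hinner : ∀ J, (∑ J' ∈ Λ, ε J J' x * v J') = ∑ j : ι, ε J j.1 x * w j := by
      intro J
      rw [← Finset.sum_subset (Finset.filter_subset (fun J => Fin.last N ∈ J) Λ)
        (fun J' hJ' hJ'ρ => by rw [hvn J' hJ'ρ, mul_zero])]
      rw [← Finset.sum_coe_sort ρ (fun J' => ε J J' x * v J')]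
      exact Finset.sum_congr rfl (fun j _ => by rw [hvρ j.1 j.2])
    have hb : (∑ J ∈ Λ, (∑ J' ∈ Λ, ε J J' x * v J') * (starRingEnd ℂ) (v J))
        = ∑ i : ι, (∑ j : ι, Amat x i j * w j) * (starRingEnd ℂ) (w i) := by
      rw [← Finset.sum_subset (Finset.filter_subset (fun J => Fin.last N ∈ J) Λ)
        (fun J hJ hJρ => by rw [hvn J hJρ]; simp)]
      rw [← Finset.sum_coe_sort ρ
        (fun J => (∑ J' ∈ Λ, ε J J' x * v J') * (starRingEnd ℂ) (v J))]
      refine Finset.sum_congr rfl (fun i _ => ?_)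
      rw [hinner i.1, hvρ i.1 i.2]
    rw [ha, hb] at h1
    exact h1
  have hunitdet : ∀ x ∈ U, IsUnit (Amat x).det := fun x hx =>
    (Matrix.isUnit_iff_isUnit_det _).mp (isUnit_of_coercive hδ (hposA x hx))
  have hBsm : ∀ i j : ι, ContDiffOn ℝ 1 (fun x => (Amat x)⁻¹ i j) U :=
    contDiffOn_inv_entry hAsm hunitdet
  have hBbd : ∀ x ∈ U, ∀ i j : ι, ‖(Amat x)⁻¹ i j‖ ≤ 1 / δ :=
    fun x hx i j => inv_entry_bound hδ (hposA x hx) i j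
  have hBder : ∀ x ∈ U, ∀ l m : ι, ‖fderivWithin ℝ (fun y => (Amat y)⁻¹ l m) U x‖
      ≤ (Fintype.card ι)^2 * ((1/δ)^2 * M) :=
    fun x hx l m => inv_entry_deriv_bound hU hAsm hunitdet hMA hBbd hx l m
  set Mb : ℝ := max (1/δ) ((Fintype.card ι)^2 * ((1/δ)^2 * M)) with hMb
  -- weak derivatives of the data
  have hρ' : ∀ i : ι, ∃ g, MemLp g 2 (volume.restrict U) ∧
      HasWeakPartialDerivOn U (Fin.last N) (fun x => ∑ J ∈ Λ, ε i.1 J x * H J x) g :=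
    fun i => hnormρ i.1 (cardi i) (memlast i)
  choose gEH hgEH1 hgEH2 using hρ'
  have hτ' : ∀ j : κ, ∃ g, MemLp g 2 (volume.restrict U) ∧
      HasWeakPartialDerivOn U (Fin.last N) (H j.1) g :=
    fun j => hnormτ j.1 (cardκ j) (notlastκ j)
  choose gτ hgτ1 hgτ2 using hτ'
  -- measurability/boundedness of ε entries
  have hεSM : ∀ (I' J' : Finset (Fin (N + 1))), I'.card = q → J'.card = q →
      AEStronglyMeasurable (ε I' J') (volume.restrict U) := fun I' J' h1 h2 =>
    ((hεsmooth I' J' h1 h2).continuousOn).aestronglyMeasurable hU.measurableSet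
  -- MemLp of εH sums
  have hmemEH : ∀ i : ι, MemLp (fun x => ∑ J ∈ Λ, ε i.1 J x * H J x) 2 (volume.restrict U) := by
    intro i
    have h1 := memLp_finset_sum' Λ (fun J hJ => memℒp_mul_L2 hU.measurableSet
      (hεSM i.1 J (cardi i) (hcardΛ J hJ))
      (fun x hx => (hM i.1 J (cardi i) (hcardΛ J hJ) x hx).1) (hH J (hcardΛ J hJ)))
    have he : (fun x => ∑ J ∈ Λ, ε i.1 J x * H J x)
        = ∑ J ∈ Λ, (fun x => ε i.1 J x * H J x) := by
      funext x; simp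
    rwa [he]
  -- WD for tangential part of each row
  have hWDτ : ∀ i : ι, WD U (Fin.last N)
      (fun x => ∑ j : κ, ε i.1 j.1 x * H j.1 x)
      (fun x => ∑ j : κ, (fderivWithin ℝ (ε i.1 j.1) U x (EuclideanSpace.single (Fin.last N) 1)
        * H j.1 x + ε i.1 j.1 x * gτ j x)) := by
    intro i
    exact WD.sum hU (fun j _ => WD.mul hU (hεsmooth i.1 j.1 (cardi i) (cardκ j))
      (fun x hx => (hM i.1 j.1 (cardi i) (cardκ j) x hx).1)
      (fun x hx => (hM i.1 j.1 (cardi i) (cardκ j) x hx).2)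
      ⟨hH j.1 (cardκ j), hgτ1 j, hgτ2 j⟩)
  -- G i and its weak derivative
  set G : ι → EuclideanSpace ℝ (Fin (N + 1)) → ℂ := fun i x =>
    (∑ J ∈ Λ, ε i.1 J x * H J x) - ∑ j : κ, ε i.1 j.1 x * H j.1 x with hG
  set gG : ι → EuclideanSpace ℝ (Fin (N + 1)) → ℂ := fun i x =>
    gEH i x - ∑ j : κ, (fderivWithin ℝ (ε i.1 j.1) U x (EuclideanSpace.single (Fin.last N) 1)
        * H j.1 x + ε i.1 j.1 x * gτ j x) with hgG
  have hWDG : ∀ i : ι, WD U (Fin.last N) (G i) (gG i) := fun i =>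
    WD.sub hU ⟨hmemEH i, hgEH1 i, hgEH2 i⟩ (hWDτ i)
  -- pointwise identity
  have hGeq : ∀ (i : ι) (x : EuclideanSpace ℝ (Fin (N + 1))),
      G i x = ∑ j : ι, Amat x i j * H j.1 x := by
    intro i x
    have h1 : (∑ j : κ, ε i.1 j.1 x * H j.1 x) = ∑ J ∈ τf, ε i.1 J x * H J x :=
      Finset.sum_coe_sort τf (fun J => ε i.1 J x * H J x)
    have h2 : (∑ j : ι, Amat x i j * H j.1 x) = ∑ J ∈ ρ, ε i.1 J x * H J x :=
      Finset.sum_coe_sort ρ (fun J => ε i.1 J x * H J x)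
    have h3 : ∀ I' : Finset (Fin (N + 1)), ((∑ J ∈ ρ, ε I' J x * H J x)
        + ∑ J ∈ τf, ε I' J x * H J x) = ∑ J ∈ Λ, ε I' J x * H J x := by
      intro I'
      rw [hρ, hτ]
      exact Finset.sum_filter_add_sum_filter_not Λ _ _
    show (∑ J ∈ Λ, ε i.1 J x * H J x) - (∑ j : κ, ε i.1 j.1 x * H j.1 x) = _
    rw [h1, h2, ← h3 i.1]
    ring
  -- coefficient functions
  set bfun : ι → EuclideanSpace ℝ (Fin (N + 1)) → ℂ := fun i x => (Amat x)⁻¹ i₀ i with hbfun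
  have hWDfin : WD U (Fin.last N) (fun x => ∑ i : ι, bfun i x * G i x)
      (fun x => ∑ i : ι, (fderivWithin ℝ (bfun i) U x (EuclideanSpace.single (Fin.last N) 1)
        * G i x + bfun i x * gG i x)) := by
    refine WD.sum hU (fun i _ => WD.mul hU (M := Mb) (hBsm i₀ i) ?_ ?_ (hWDG i))
    · intro x hx
      exact le_trans (hBbd x hx i₀ i) (le_max_left _ _)
    · intro x hx
      exact le_trans (hBder x hx i₀ i) (le_max_right _ _)
  -- final pointwise identity
  have hfinal : ∀ x ∈ U, (∑ i : ι, bfun i x * G i x) = H I x := by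
    intro x hx
    have hBA : (Amat x)⁻¹ * Amat x = 1 := Matrix.nonsing_inv_mul _ (hunitdet x hx)
    calc ∑ i : ι, bfun i x * G i x
        = ∑ i : ι, ∑ j : ι, ((Amat x)⁻¹ i₀ i * Amat x i j) * H j.1 x := by
          refine Finset.sum_congr rfl (fun i _ => ?_)
          rw [hGeq i x]
          show (Amat x)⁻¹ i₀ i * _ = _
          rw [Finset.mul_sum]
          refine Finset.sum_congr rfl (fun j _ => ?_)
          ring
      _ = ∑ j : ι, (∑ i : ι, (Amat x)⁻¹ i₀ i * Amat x i j) * H j.1 x := by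
          rw [Finset.sum_comm]
          exact Finset.sum_congr rfl (fun j _ => (Finset.sum_mul _ _ _).symm)
      _ = ∑ j : ι, ((1 : Matrix ι ι ℂ) i₀ j) * H j.1 x := by
          refine Finset.sum_congr rfl (fun j _ => ?_)
          rw [← Matrix.mul_apply, hBA]
      _ = H I x := by
          rw [Finset.sum_eq_single i₀]
          · simp [Matrix.one_apply, i₀]
          · intro b _ hb
            rw [Matrix.one_apply_ne (Ne.symm hb), zero_mul]
          · intro h
            exact absurd (Finset.mem_univ i₀) h
  have hfin2 := WD.congr hU hWDfin hfinal (hH I hI)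
  exact ⟨_, hfin2.2.1, hfin2.2.2⟩
end
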